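/- arXiv:1206.0327 — 2 statements merged into one kernel-verified Lean document; each statement's English description precedes it below -/
import Mathlib

section
/- ι(kQ) ⊆ kℒ^+: every labeled forest occurring in the image under ι of any element of kQ is aligned. -/
set_option maxHeartbeats 1000000

/-! # Common definitions: trees, forests, descent algebras -/

/-- Labeled binary trees: leaves carry a natural number (positive in valid forests),
internal nodes carry a label. -/
inductive LTree : Type
  | leaf : ℕ → LTree
  | node : ℕ → LTree → LTree → LTree
  deriving DecidableEq

instance : Inhabited LTree := ⟨LTree.leaf 1⟩

/-- Unlabeled binary trees with natural number leaves. -/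
inductive UTree : Type
  | leaf : ℕ → UTree
  | node : UTree → UTree → UTree
  deriving DecidableEq

instance : Inhabited UTree := ⟨UTree.leaf 1⟩

namespace LTree

/-- The value of a tree: the sum of its leaf entries. -/
def value : LTree → ℕ
  | leaf x => x
  | node _ t1 t2 => t1.value + t2.value

/-- The foliage of a tree: the list of its leaf entries, left to right. -/
def foliage : LTree → List ℕ
  | leaf x => [x]
  | node _ t1 t2 => t1.foliage ++ t2.foliage

/-- The number of internal nodes. -/
def numNodes : LTree → ℕ
  | leaf _ => 0
  | node _ t1 t2 => t1.numNodes + t2.numNodes + 1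

/-- The list of node labels (in preorder). -/
def labels : LTree → List ℕ
  | leaf _ => []
  | node i t1 t2 => i :: (t1.labels ++ t2.labels)

/-- Labels strictly increase downwards, starting above `p`. -/
def incrFrom : ℕ → LTree → Prop
  | _, leaf _ => True
  | p, node i t1 t2 => p < i ∧ incrFrom i t1 ∧ incrFrom i t2

/-- Shift all node labels up by `m`. -/
def shift (m : ℕ) : LTree → LTree
  | leaf x => leaf x
  | node i t1 t2 => node (i + m) (t1.shift m) (t2.shift m)

/-- Decrease all node labels by one. -/
def dec : LTree → LTree
  | leaf x => leaf x
  | node i t1 t2 => node (i - 1) t1.dec t2.dec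

/-- A tree is aligned if at every node the value of the left subtree is
strictly smaller than the value of the right subtree. -/
def Aligned : LTree → Prop
  | leaf _ => True
  | node _ t1 t2 => t1.value < t2.value ∧ t1.Aligned ∧ t2.Aligned

/-- Replace the leaves of a tree (left to right) by the trees from the supplied list;
returns the new tree together with the unused trees. -/
def graft : LTree → List LTree → LTree × List LTree
  | leaf x, [] => (leaf x, [])
  | leaf _, t :: ts => (t, ts)
  | node i t1 t2, ts =>
    let p1 := t1.graft ts
    let p2 := t2.graft p1.2
    (node i p1.1 p2.1, p2.2)

/-- Find the node with label `i` and return the values of its two subtrees. -/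
def findLab (i : ℕ) : LTree → Option (ℕ × ℕ)
  | leaf _ => none
  | node j t1 t2 =>
    if j = i then some (t1.value, t2.value)
    else (t1.findLab i).orElse (fun _ => t2.findLab i)

/-- The label at the root, if the tree is a node. -/
def rootLabel? : LTree → Option ℕ
  | leaf _ => none
  | node i _ _ => some i

/-- The subtree at a position (list of booleans; `false` = left, `true` = right). -/
def subtreeAt : LTree → List Bool → Option LTree
  | t, [] => some t
  | leaf _, _ :: _ => none
  | node _ t1 t2, b :: p => (if b then t2 else t1).subtreeAt p

/-- Replace the subtree at a position. -/
def replaceAt : LTree → List Bool → LTree → LTree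
  | _, [], u => u
  | leaf x, _ :: _, _ => leaf x
  | node i t1 t2, b :: p, u =>
    if b then node i t1 (t2.replaceAt p u) else node i (t1.replaceAt p u) t2

end LTree

namespace UTree

/-- The value of an unlabeled tree. -/
def value : UTree → ℕ
  | leaf x => x
  | node t1 t2 => t1.value + t2.value

/-- The foliage of an unlabeled tree. -/
def foliage : UTree → List ℕ
  | leaf x => [x]
  | node t1 t2 => t1.foliage ++ t2.foliage

/-- The number of internal nodes. -/
def numNodes : UTree → ℕ
  | leaf _ => 0
  | node t1 t2 => t1.numNodes + t2.numNodes + 1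

/-- All leaf entries are positive. -/
def leavesPos : UTree → Prop
  | leaf x => 0 < x
  | node t1 t2 => t1.leavesPos ∧ t2.leavesPos

/-- An unlabeled tree is aligned if at every node the left value is smaller
than the right value. -/
def Aligned : UTree → Prop
  | leaf _ => True
  | node t1 t2 => t1.value < t2.value ∧ t1.Aligned ∧ t2.Aligned

/-- No node has two leaf children bearing the same value. -/
def NoTwin : UTree → Prop
  | leaf _ => True
  | node t1 t2 => t1.NoTwin ∧ t2.NoTwin ∧ ¬ ∃ a, t1 = leaf a ∧ t2 = leaf a

/-- Graft: replace leaves (left to right) by trees from the supplied list. -/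
def graft : UTree → List UTree → UTree × List UTree
  | leaf x, [] => (leaf x, [])
  | leaf _, t :: ts => (t, ts)
  | node t1 t2, ts =>
    let p1 := t1.graft ts
    let p2 := t2.graft p1.2
    (node p1.1 p2.1, p2.2)

/-- The total order on unlabeled trees: compare values, then (reversed) number of
nodes, then recursively the left and right subtrees. -/
def ltt : UTree → UTree → Prop
  | leaf a, leaf b => a < b
  | leaf a, node y1 y2 => a < (node y1 y2).value
  | node x1 x2, leaf b => (node x1 x2).value ≤ b
  | node x1 x2, node y1 y2 =>
      (node x1 x2).value < (node y1 y2).value ∨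
      ((node x1 x2).value = (node y1 y2).value ∧
        ((node y1 y2).numNodes < (node x1 x2).numNodes ∨
          ((node x1 x2).numNodes = (node y1 y2).numNodes ∧
            (ltt x1 y1 ∨ (x1 = y1 ∧ ltt x2 y2)))))

end UTree

/-- Erase the node labels of a labeled tree. -/
def eraseT : LTree → UTree
  | .leaf x => .leaf x
  | .node _ t1 t2 => .node (eraseT t1) (eraseT t2)

/-! ## Labeled forests -/

/-- The squash of a forest: the list of values of its trees. -/
def squash (X : List LTree) : List ℕ := X.map LTree.value

/-- The foliage of a forest. -/
def forestFoliage (X : List LTree) : List ℕ := X.flatMap LTree.foliage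

/-- The length of a forest: its total number of nodes. -/
def forestLen (X : List LTree) : ℕ := (X.map LTree.numNodes).sum

/-- The value of a forest: the sum of the values of its trees. -/
def forestValue (X : List LTree) : ℕ := (X.map LTree.value).sum

/-- All node labels of a forest. -/
def forestLabels (X : List LTree) : List ℕ := X.flatMap LTree.labels

/-- A list of labeled trees is a labeled forest if every node's label exceeds that
of its parent, the labels used are exactly `1, 2, …, l` where `l` is the number
of nodes, and all leaves are positive. -/
def IsLForest (X : List LTree) : Prop :=
  (∀ t ∈ X, t.incrFrom 0) ∧
  (forestLabels X).Perm (List.range' 1 (forestLen X)) ∧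
  ∀ x ∈ forestFoliage X, 0 < x

/-- A forest is aligned if all its trees are. -/
def ForestAligned (X : List LTree) : Prop := ∀ t ∈ X, t.Aligned

/-- Replace the leaves of the forest `X` (left to right) by the trees of `ys`. -/
def graftForest : List LTree → List LTree → List LTree
  | [], _ => []
  | t :: ts, ys =>
    let p := t.graft ys
    p.1 :: graftForest ts p.2

/-- The product `X • Y` of labeled forests: replace the `i`-th leaf of `X` by the
`i`-th tree of `Y`, after shifting all node labels of `Y` up by `ℓ(X)`.
(Meaningful when the foliage of `X` equals the squash of `Y`.) -/
def bullet (X Y : List LTree) : List LTree :=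
  graftForest X (Y.map (LTree.shift (forestLen X)))

/-- The forest of leaves determined by a composition. -/
def leavesOf (c : List ℕ) : List LTree := c.map LTree.leaf

/-- Iterated product `X₁ • (X₂ • (⋯ • Xₗ))` of a list of forests. -/
def chainProd : List (List LTree) → List LTree
  | [] => []
  | [A] => A
  | A :: F => bullet A (chainProd F)

/-- Find the node with label `i` in a forest; return the values of its subtrees. -/
def forestFindLab (i : ℕ) : List LTree → Option (ℕ × ℕ)
  | [] => none
  | t :: r => (t.findLab i).orElse (fun _ => forestFindLab i r)

/-! ## Unlabeled forests -/

def squashU (X : List UTree) : List ℕ := X.map UTree.value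
def foliageU (X : List UTree) : List ℕ := X.flatMap UTree.foliage
def forestLenU (X : List UTree) : ℕ := (X.map UTree.numNodes).sum
def forestValueU (X : List UTree) : ℕ := (X.map UTree.value).sum

/-- An unlabeled forest is valid when all its leaves are positive. -/
def IsUForest (X : List UTree) : Prop := ∀ x ∈ foliageU X, 0 < x

def ForestAlignedU (X : List UTree) : Prop := ∀ t ∈ X, t.Aligned

def graftForestU : List UTree → List UTree → List UTree
  | [], _ => []
  | t :: ts, ys =>
    let p := t.graft ys
    p.1 :: graftForestU ts p.2

/-- The product of unlabeled forests (no label adjustment needed). -/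
def bulletU (X Y : List UTree) : List UTree := graftForestU X Y

/-- Erase all node labels of a labeled forest. -/
def eraseF (X : List LTree) : List UTree := X.map eraseT
/-! ## The difference operator δ and the map Δ -/

/-- Locate the part of the forest whose root is the node labeled `1`; return its
(0-based) index together with the forest obtained by splitting that part into its
two subtrees. -/
def splitAt1 : List LTree → Option (ℕ × List LTree)
  | [] => none
  | LTree.node i t1 t2 :: rest =>
      if i = 1 then some (0, t1 :: t2 :: rest)
      else (splitAt1 rest).map (fun p => (p.1 + 1, LTree.node i t1 t2 :: p.2))
  | LTree.leaf x :: rest => (splitAt1 rest).map (fun p => (p.1 + 1, LTree.leaf x :: p.2))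

/-- Swap the entries in positions `i` and `i+1` (0-based) of a list. -/
def swapAdj {α : Type} : ℕ → List α → List α
  | 0, a :: b :: r => b :: a :: r
  | n + 1, a :: r => a :: swapAdj n r
  | _, l => l

/-- The difference operator `δ` on the span of labeled forests: if `ℓ(X) = 0` then
`δ(X) = X`; otherwise, if the node labeled 1 is the root of the `i`-th part with
subtrees `X₁, X₂`, then `δ(X) = Y − Y.(i,i+1)` where `Y` is obtained by replacing
the `i`-th part by the parts `X₁ X₂` and decreasing all labels by one. -/
noncomputable def deltaF (k : Type) [Ring k] (X : List LTree) : (List LTree) →₀ k :=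
  match splitAt1 X with
  | none => Finsupp.single X 1
  | some (i, Y) =>
      Finsupp.single (Y.map LTree.dec) 1 - Finsupp.single (swapAdj i (Y.map LTree.dec)) 1

/-- The linear extension of `δ`. -/
noncomputable def deltaLin (k : Type) [Ring k] :
    ((List LTree) →₀ k) →ₗ[k] ((List LTree) →₀ k) :=
  (Finsupp.lift ((List LTree) →₀ k) k (List LTree)) (deltaF k)

/-- `Δ(X) = δ^{ℓ(X)}(X)`, recorded as an element of the free associative algebra
with basis the compositions (identifying a forest of length 0 with its foliage). -/
noncomputable def DeltaComp (k : Type) [Ring k] (X : List LTree) : (List ℕ) →₀ k :=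
  Finsupp.mapDomain forestFoliage
    ((fun v => deltaLin k v)^[forestLen X] (Finsupp.single X 1))

/-- The linear map `Δ : kL → kℕ*`. -/
noncomputable def DeltaMap (k : Type) [Ring k] : ((List LTree) →₀ k) →ₗ[k] ((List ℕ) →₀ k) :=
  (Finsupp.lift ((List ℕ) →₀ k) k (List LTree)) (DeltaComp k)

/-! ## Pólya orbit sums and products on the spans -/

/-- The Pólya orbit sum `[X]` of a labeled forest: the sum of all distinct
rearrangements of its parts. -/
noncomputable def pol (k : Type) [Semiring k] (X : List LTree) : (List LTree) →₀ k :=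
  ∑ Y ∈ X.permutations.toFinset, Finsupp.single Y 1

/-- The Pólya orbit sum of an unlabeled forest. -/
noncomputable def polU (k : Type) [Semiring k] (X : List UTree) : (List UTree) →₀ k :=
  ∑ Y ∈ X.permutations.toFinset, Finsupp.single Y 1

/-- The bilinear product on `kL`: `X • Y` when foliage of `X` equals squash of `Y`,
and `0` otherwise. -/
noncomputable def mulL (k : Type) [Semiring k] (f g : (List LTree) →₀ k) : (List LTree) →₀ k :=
  f.sum fun X a => g.sum fun Y b =>
    if forestFoliage X = squash Y then Finsupp.single (bullet X Y) (a * b) else 0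

/-- The bilinear product on `kM` (unlabeled forests). -/
noncomputable def mulM (k : Type) [Semiring k] (f g : (List UTree) →₀ k) : (List UTree) →₀ k :=
  f.sum fun X a => g.sum fun Y b =>
    if foliageU X = squashU Y then Finsupp.single (bulletU X Y) (a * b) else 0

/-- The concatenation product on `kM`. -/
noncomputable def mulCat (k : Type) [Semiring k] (f g : (List UTree) →₀ k) : (List UTree) →₀ k :=
  f.sum fun X a => g.sum fun Y b => Finsupp.single (X ++ Y) (a * b)

/-- The product on the free associative algebra `kℕ*` (concatenation of compositions). -/
noncomputable def mulComp (k : Type) [Semiring k] (f g : (List ℕ) →₀ k) : (List ℕ) →₀ k :=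
  f.sum fun u a => g.sum fun v b => Finsupp.single (u ++ v) (a * b)

/-- The linear map `E : kL → kM` erasing node labels. -/
noncomputable def EL (k : Type) [Semiring k] : ((List LTree) →₀ k) →ₗ[k] ((List UTree) →₀ k) :=
  Finsupp.lmapDomain k k eraseF

/-- `π` on a single unlabeled tree: replace every node by the Lie bracket. -/
noncomputable def piT (k : Type) [Ring k] : UTree → (List ℕ) →₀ k
  | .leaf x => Finsupp.single [x] 1
  | .node t1 t2 => mulComp k (piT k t1) (piT k t2) - mulComp k (piT k t2) (piT k t1)

/-- `π` on an unlabeled forest: the concatenation product of the images of its parts. -/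
noncomputable def piF (k : Type) [Ring k] (X : List UTree) : (List ℕ) →₀ k :=
  (X.map (piT k)).foldr (mulComp k) (Finsupp.single [] 1)

/-- The Pólya action of a permutation of `Fin j` on a list: the entry in position
`i` of the result is the entry in position `σ⁻¹ i` of the input. -/
def permuteL {α : Type} [Inhabited α] {j : ℕ} (σ : Equiv.Perm (Fin j)) (X : List α) :
    List α :=
  List.ofFn fun i => X.getD ((σ⁻¹ i : Fin j) : ℕ) default
/-! ## The quiver Q, its paths, and the map ι -/

/-- The partition obtained by splitting one part `a+b` into parts `a` and `b`. -/
def applyStep (a b : ℕ) (p : Multiset ℕ) : Multiset ℕ := a ::ₘ b ::ₘ p.erase (a + b)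

/-- The vertex reached from `p` after performing the given splitting steps. -/
def sourceAfter (p : Multiset ℕ) (steps : List (ℕ × ℕ)) : Multiset ℕ :=
  steps.foldl (fun q s => applyStep s.1 s.2 q) p

/-- A path in the quiver `Q`, recorded by its destination vertex (a partition,
i.e. a multiset of parts) together with the list of branch symbols `[aᵢ|bᵢ]`
read from the destination towards the source. -/
structure QPath where
  dest : Multiset ℕ
  steps : List (ℕ × ℕ)
  deriving DecidableEq

/-- Each step is applicable in turn. -/
def SeqOK : Multiset ℕ → List (ℕ × ℕ) → Prop
  | _, [] => True
  | p, s :: rest => s.1 + s.2 ∈ p ∧ SeqOK (applyStep s.1 s.2 p) rest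

/-- A valid path of `Q`: positive parts, each step `[a|b]` has `0 < a < b`, and the
steps apply in sequence. -/
def QPath.Valid (P : QPath) : Prop :=
  (∀ x ∈ P.dest, 0 < x) ∧ (∀ s ∈ P.steps, 0 < s.1 ∧ s.1 < s.2) ∧ SeqOK P.dest P.steps

/-- The source vertex of a path. -/
def QPath.source (P : QPath) : Multiset ℕ := sourceAfter P.dest P.steps

/-- The canonical length-one forest attached to the edge with destination `q`
splitting a part `a + b` into `a` and `b`. -/
noncomputable def edgeForest (a b : ℕ) (q : Multiset ℕ) : List LTree :=
  LTree.node 1 (LTree.leaf a) (LTree.leaf b) :: leavesOf (q.erase (a + b)).toList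

/-- `ι` on the path with destination `p` and branch symbols `steps`:
the product (in `kℒ`) of the orbit sums of the edge forests, with the edge nearest
the destination leftmost, times the orbit sum of the source vertex. -/
noncomputable def iotaSteps (k : Type) [Semiring k] :
    Multiset ℕ → List (ℕ × ℕ) → ((List LTree) →₀ k)
  | p, [] => pol k (leavesOf p.toList)
  | p, s :: rest =>
      mulL k (pol k (edgeForest s.1 s.2 p)) (iotaSteps k (applyStep s.1 s.2 p) rest)

/-- `ι` of a single path. -/
noncomputable def iotaP (k : Type) [Semiring k] (P : QPath) : (List LTree) →₀ k :=
  iotaSteps k P.dest P.steps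

/-- The linear extension `ι : kQ → kℒ`. -/
noncomputable def iotaLinM (k : Type) [Semiring k] : (QPath →₀ k) →ₗ[k] ((List LTree) →₀ k) :=
  (Finsupp.lift ((List LTree) →₀ k) k QPath) (iotaP k)

/-! ## The branch monoid and its actions -/

/-- All ways to replace one leaf of value `a+b` in a tree by a node labeled `lab`
with leaves `a` and `b`. -/
def branchActTree (a b lab : ℕ) : LTree → List LTree
  | .leaf x =>
      if x = a + b then [LTree.node lab (LTree.leaf a) (LTree.leaf b)] else []
  | .node i t1 t2 =>
      (branchActTree a b lab t1).map (fun u => LTree.node i u t2) ++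
      (branchActTree a b lab t2).map (fun u => LTree.node i t1 u)

/-- All ways to replace one leaf of value `a+b` in a forest by a node labeled `lab`. -/
def branchWays (a b lab : ℕ) : List LTree → List (List LTree)
  | [] => []
  | t :: rest =>
      (branchActTree a b lab t).map (· :: rest) ++
      (branchWays a b lab rest).map (t :: ·)

/-- The action of the branch symbol `[a|b]` on `kL`. -/
noncomputable def actL1 (k : Type) [Semiring k] (s : ℕ × ℕ) (x : (List LTree) →₀ k) :
    (List LTree) →₀ k :=
  x.sum fun X a =>
    a • ((branchWays s.1 s.2 (forestLen X + 1) X).map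
      (fun Y => Finsupp.single Y (1 : k))).sum

/-- The action of a word of the branch monoid `ℬ*` on `kL`. -/
noncomputable def actLW (k : Type) [Semiring k] (w : List (ℕ × ℕ)) (x : (List LTree) →₀ k) :
    (List LTree) →₀ k :=
  w.foldl (fun y s => actL1 k s y) x

/-- The action of the branch symbol `[a|b]` on `kQ`: prepend an edge at the source
if the source has a part `a + b`, and `0` otherwise. -/
noncomputable def actQ1 (k : Type) [Semiring k] (s : ℕ × ℕ) (x : QPath →₀ k) : QPath →₀ k :=
  x.sum fun P a =>
    if s.1 + s.2 ∈ P.source then Finsupp.single ⟨P.dest, P.steps ++ [s]⟩ a else 0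

/-- The action of a word of `ℬ*` on `kQ`. -/
noncomputable def actQW (k : Type) [Semiring k] (w : List (ℕ × ℕ)) (x : QPath →₀ k) :
    QPath →₀ k :=
  w.foldl (fun y s => actQ1 k s y) x

/-- The path `𝔭(X)` associated to an (aligned) labeled forest `X`: the destination is
the partition of the squash of `X`, and the `i`-th branch symbol records the values of
the two subtrees of the node labeled `i`. -/
noncomputable def pPath (X : List LTree) : QPath :=
  ⟨(squash X : Multiset ℕ),
    (List.range (forestLen X)).map fun i => (forestFindLab (i + 1) X).getD (0, 0)⟩
/-! ## The equivalence ∼ on labeled forests -/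

/-- The subtree of a forest at a position (part index, path in the part). -/
def forestSubtreeAt (X : List LTree) (q : ℕ × List Bool) : Option LTree :=
  if h : q.1 < X.length then (X.get ⟨q.1, h⟩).subtreeAt q.2 else none

/-- Replace the subtree at a position of a forest. -/
def forestReplaceAt (X : List LTree) (q : ℕ × List Bool) (u : LTree) : List LTree :=
  X.set q.1 ((X.getD q.1 default).replaceAt q.2 u)

/-- The label of the parent node of the position `q`, if it exists. -/
def parentLabel (X : List LTree) (q : ℕ × List Bool) : Option ℕ :=
  if q.2 = [] then none
  else (forestSubtreeAt X (q.1, q.2.dropLast)).bind LTree.rootLabel?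

/-- Two positions address disjoint subtrees. -/
def PosDisjoint (q r : ℕ × List Bool) : Prop :=
  q.1 ≠ r.1 ∨ (q.1 = r.1 ∧ ¬ q.2 <+: r.2 ∧ ¬ r.2 <+: q.2)

/-- Move (1): exchange two disjoint non-leaf subtrees `U`, `V` of equal value such that
the labels of the parents of `U` and `V` (where these exist) are smaller than the root
labels of `U` and `V`. -/
def Move1 (X Y : List LTree) : Prop :=
  ∃ (q r : ℕ × List Bool) (U V : LTree),
    PosDisjoint q r ∧
    forestSubtreeAt X q = some U ∧ forestSubtreeAt X r = some V ∧
    U.rootLabel?.isSome ∧ V.rootLabel?.isSome ∧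
    U.value = V.value ∧
    (∀ m, (parentLabel X q = some m ∨ parentLabel X r = some m) →
      ∀ j, (U.rootLabel? = some j ∨ V.rootLabel? = some j) → m < j) ∧
    Y = forestReplaceAt (forestReplaceAt X q V) r U

/-- Exchange the entries in positions `i` and `j` of a list. -/
def swapEntries (X : List LTree) (i j : ℕ) : List LTree :=
  (X.set i (X.getD j default)).set j (X.getD i default)

/-- Move (2): exchange two parts of a forest. -/
def Move2 (X Y : List LTree) : Prop :=
  ∃ i j, i < j ∧ j < X.length ∧ Y = swapEntries X i j

/-- The equivalence relation `∼` generated by the two kinds of moves. -/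
def SimRel : List LTree → List LTree → Prop :=
  Relation.ReflTransGen (fun A B => Move1 A B ∨ Move2 A B)

/-! ## The labeling map F -/

/-- Preorder labeling of an unlabeled tree, starting after label `s`; returns the
labeled tree and the last label used. -/
def labelTreeAux : ℕ → UTree → LTree × ℕ
  | s, .leaf x => (LTree.leaf x, s)
  | s, .node t1 t2 =>
    let p1 := labelTreeAux (s + 1) t1
    let p2 := labelTreeAux p1.2 t2
    (LTree.node (s + 1) p1.1 p2.1, p2.2)

def labelFAux : ℕ → List UTree → List LTree
  | _, [] => []
  | s, t :: r =>
    let p := labelTreeAux s t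
    p.1 :: labelFAux p.2 r

/-- The labeled forest `F(X)`: label the nodes of each part in prefix (preorder)
order, the nodes of each part receiving smaller labels than those of later parts. -/
def labelF (X : List UTree) : List LTree := labelFAux 0 X

/-! ## Compositions from subsets, and alleys -/

/-- The composition of `n` attached to a subset `J ⊆ {1, …, n−1}`: the list of
successive differences of `{0, n} ∪ (S ∖ J)`. -/
def phi (n : ℕ) (J : Finset ℕ) : List ℕ :=
  let ts := ((Finset.Icc 1 (n - 1)) \ J).sort (· ≤ ·)
  List.zipWith (fun a b => b - a) (0 :: ts) (ts ++ [n])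

/-- The start of the maximal block of consecutive points containing `i` linked by
the transpositions in `J` (the transposition `s` links `s` and `s+1`). -/
def bStart (J : Finset ℕ) : ℕ → ℕ
  | 0 => 0
  | 1 => 1
  | i + 2 => if (i + 1) ∈ J then bStart J (i + 1) else i + 2

/-- The end of the maximal block of consecutive points of `{1, …, n}` containing `i`
linked by the transpositions in `J`. -/
def bEnd (J : Finset ℕ) (n : ℕ) (i : ℕ) : ℕ :=
  if h : i < n ∧ i ∈ J then bEnd J n (i + 1) else i
termination_by n - i
decreasing_by
  have := h.1
  omega

/-- The longest element `w_J` of the parabolic subgroup `W_J ≤ Sₙ`, described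
explicitly as the permutation of `{1, …, n}` reversing each maximal block of
consecutive points linked by the transpositions in `J`. -/
def wJpt (n : ℕ) (J : Finset ℕ) (i : ℕ) : ℕ := bStart J i + bEnd J n i - i

/-- The permutation `ω = w_J ⬝ w_{J ∪ {t}}` (as a right action on points). -/
def omegaPt (n : ℕ) (J : Finset ℕ) (t : ℕ) (i : ℕ) : ℕ :=
  wJpt n (insert t J) (wJpt n J i)

/-- The conjugate `s^ω` of the Coxeter generator `s` by `ω = w_J w_{J∪{t}}`:
the generator whose transposition exchanges the images of `s` and `s+1`. -/
def conjGen (n : ℕ) (J : Finset ℕ) (t : ℕ) (s : ℕ) : ℕ :=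
  min (omegaPt n J t s) (omegaPt n J t (s + 1))

/-- An alley `(J; s₁, …, s_l)`. -/
structure Alley where
  J : Finset ℕ
  s : List ℕ
  deriving DecidableEq

/-- A valid alley for `Sₙ`: `J ⊆ S = {1, …, n−1}` and `s₁, …, s_l` are distinct
elements of `J`. -/
def IsAlley (n : ℕ) (a : Alley) : Prop :=
  a.J ⊆ Finset.Icc 1 (n - 1) ∧ a.s.Nodup ∧ ∀ x ∈ a.s, x ∈ a.J

/-- The action of the Coxeter generator `t` on an alley:
`(J; s₁, …, s_l).t = (J^ω; s₁^ω, …, s_l^ω)` where `ω = w_J w_{J∪{t}}`. -/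
def actAlley (n : ℕ) (t : ℕ) (a : Alley) : Alley :=
  ⟨a.J.image (conjGen n a.J t), a.s.map (conjGen n a.J t)⟩

/-- The action of a word of the free monoid `S*` on alleys. -/
def actWordA (n : ℕ) (a : Alley) (w : List ℕ) : Alley :=
  w.foldl (fun b t => actAlley n t b) a

/-- The defining property of the forest `φ(a)` attached to an alley `a = (J; s₁,…,s_l)`:
it is a labeled forest of length `l` admitting a factorization `X₁ • ⋯ • X_l` into
length-one forests with `s(Xᵢ) = φ(J ∖ {s₁,…,s_{i−1}})` and
`f(Xᵢ) = φ(J ∖ {s₁,…,sᵢ})`; for `l = 0` it is the forest of leaves `φ(J)`. -/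
def AlleySpec (n : ℕ) (a : Alley) (X : List LTree) : Prop :=
  IsLForest X ∧ forestLen X = a.s.length ∧
  ∃ F : List (List LTree), F.length = a.s.length ∧
    (∀ A ∈ F, IsLForest A ∧ forestLen A = 1) ∧
    (∀ (i : ℕ) (h : i < F.length),
      squash (F.get ⟨i, h⟩) = phi n (a.J \ (a.s.take i).toFinset) ∧
      forestFoliage (F.get ⟨i, h⟩) = phi n (a.J \ (a.s.take (i + 1)).toFinset)) ∧
    X = F.foldr bullet (leavesOf (phi n (a.J \ a.s.toFinset)))
/-! ## The descent algebra of the symmetric group -/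

/-- `w ∈ X_J`: every descent of `w` (viewing `w` as a permutation of `{1, …, n}`
via `Fin n`) occurs at a position belonging to `J`. -/
def DescAllowed (n : ℕ) (J : Finset ℕ) (w : Equiv.Perm (Fin n)) : Prop :=
  ∀ i j : Fin n, (i : ℕ) + 1 = (j : ℕ) → w j < w i → ((i : ℕ) + 1) ∈ J

open Classical in
/-- The element `x_J = ∑_{w ∈ X_J} w` of the group algebra of `Sₙ`. -/
noncomputable def xJelt (k : Type) [Semiring k] (n : ℕ) (J : Finset ℕ) :
    MonoidAlgebra k (Equiv.Perm (Fin n)) :=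
  ∑ w : Equiv.Perm (Fin n),
    if DescAllowed n J w then MonoidAlgebra.single w 1 else 0

/-- The descent algebra `Σ(Sₙ)` as a submodule (by Solomon's theorem, a subalgebra)
of the group algebra: the span of the `x_J`, `J ⊆ S`. -/
noncomputable def descentSpan (k : Type) [Semiring k] (n : ℕ) :
    Submodule k (MonoidAlgebra k (Equiv.Perm (Fin n))) :=
  Submodule.span k {x | ∃ J ⊆ Finset.Icc 1 (n - 1), x = xJelt k n J}

/-! ## Spans -/

/-- `kℒₙ`: the span of Pólya orbit sums of labeled forests of value `n`. -/
noncomputable def LspanN (k : Type) [Semiring k] (n : ℕ) :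
    Submodule k ((List LTree) →₀ k) :=
  Submodule.span k {y | ∃ X, IsLForest X ∧ forestValue X = n ∧ y = pol k X}

/-- `kℒ`: the span of Pólya orbit sums of labeled forests. -/
noncomputable def LspanAll (k : Type) [Semiring k] : Submodule k ((List LTree) →₀ k) :=
  Submodule.span k {y | ∃ X, IsLForest X ∧ y = pol k X}

/-- `kℳ`: the span of Pólya orbit sums of unlabeled forests. -/
noncomputable def MspanAll (k : Type) [Semiring k] : Submodule k ((List UTree) →₀ k) :=
  Submodule.span k {y | ∃ X, IsUForest X ∧ y = polU k X}

/-- `kℒ⁺`: the span of Pólya orbit sums of aligned labeled forests. -/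
noncomputable def LplusSpan (k : Type) [Semiring k] : Submodule k ((List LTree) →₀ k) :=
  Submodule.span k {y | ∃ X, IsLForest X ∧ ForestAligned X ∧ y = pol k X}

/-- `kM⁺`: the span of aligned unlabeled forests. -/
noncomputable def MplusSpan (k : Type) [Semiring k] : Submodule k ((List UTree) →₀ k) :=
  Submodule.span k {y | ∃ X, IsUForest X ∧ ForestAlignedU X ∧ y = Finsupp.single X (1 : k)}

/-- The identity element of `kLₙ`: the sum of all compositions of `n`. -/
noncomputable def unitL (k : Type) [Semiring k] (n : ℕ) : (List LTree) →₀ k :=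
  ∑ c : Composition n, Finsupp.single (leavesOf c.blocks) 1

/-- `kQₙ`: the span of the valid paths of the quiver `Qₙ` (partitions of `n`). -/
noncomputable def QspanN (k : Type) [Semiring k] (n : ℕ) : Submodule k (QPath →₀ k) :=
  Submodule.span k
    {y | ∃ P : QPath, P.Valid ∧ P.dest.sum = n ∧ y = Finsupp.single P 1}

/-- The path-algebra product on `kQ`: the concatenation "`P` then `F`" when the
destination of `P` is the source of `F`, and `0` otherwise. -/
noncomputable def mulQ (k : Type) [Semiring k] (f g : QPath →₀ k) : QPath →₀ k :=
  f.sum fun P a => g.sum fun F b =>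
    if F.source = P.dest then Finsupp.single ⟨F.dest, F.steps ++ P.steps⟩ (a * b) else 0

/-! ## The ideals 𝒩 and 𝒥 -/

/-- The generators of the ideal `𝒩`: `(U,V) + (V,U)`. -/
def NGens (k : Type) [Semiring k] : Set ((List UTree) →₀ k) :=
  {g | ∃ U V : UTree, U.leavesPos ∧ V.leavesPos ∧
    g = Finsupp.single [UTree.node U V] 1 + Finsupp.single [UTree.node V U] 1}

/-- The generators of the ideal `𝒥`: the Jacobi sums
`(X,(Y,Z)) + (Y,(Z,X)) + (Z,(X,Y))`. -/
def JGens (k : Type) [Semiring k] : Set ((List UTree) →₀ k) :=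
  {g | ∃ X Y Z : UTree, X.leavesPos ∧ Y.leavesPos ∧ Z.leavesPos ∧
    g = Finsupp.single [UTree.node X (UTree.node Y Z)] 1 +
        Finsupp.single [UTree.node Y (UTree.node Z X)] 1 +
        Finsupp.single [UTree.node Z (UTree.node X Y)] 1}

/-- The two-sided ideal `𝒩 + 𝒥` of `kM` with respect to concatenation. -/
noncomputable def NJideal (k : Type) [Semiring k] : Submodule k ((List UTree) →₀ k) :=
  Submodule.span k {x | ∃ (A B : List UTree) (g : (List UTree) →₀ k),
    (g ∈ NGens k ∨ g ∈ JGens k) ∧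
    x = mulCat k (Finsupp.single A (1 : k)) (mulCat k g (Finsupp.single B 1))}

/-! ## Branch relations -/

/-- The two-term branch relation `[a|b][c|d] − [c|d][a|b]`. -/
noncomputable def Rel1 (k : Type) [Ring k] (a b c d : ℕ) : (List (ℕ × ℕ)) →₀ k :=
  Finsupp.single [(a, b), (c, d)] 1 - Finsupp.single [(c, d), (a, b)] 1

/-- The three-term branch relation
`[a|b][c|d][x|y] + [x|y][a|b][c|d] − [a|b][x|y][c|d] − [c|d][x|y][a|b]`. -/
noncomputable def Rel2 (k : Type) [Ring k] (a b c d x y : ℕ) : (List (ℕ × ℕ)) →₀ k :=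
  Finsupp.single [(a, b), (c, d), (x, y)] 1 + Finsupp.single [(x, y), (a, b), (c, d)] 1
  - Finsupp.single [(a, b), (x, y), (c, d)] 1 - Finsupp.single [(c, d), (x, y), (a, b)] 1

/-- The side condition on `a, b, c, d`: positive, `a < b`, `c < d`,
`a+b ∉ {c,d}` and `c+d ∉ {a,b}`. -/
def Cond1 (a b c d : ℕ) : Prop :=
  0 < a ∧ a < b ∧ 0 < c ∧ c < d ∧ a + b ≠ c ∧ a + b ≠ d ∧ c + d ≠ a ∧ c + d ≠ b

/-- The set `ℛ ⊆ kℬ*` of branch relations. -/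
noncomputable def BranchRels (k : Type) [Ring k] : Set ((List (ℕ × ℕ)) →₀ k) :=
  {r | ∃ a b c d, Cond1 a b c d ∧ r = Rel1 k a b c d} ∪
  {r | ∃ a b c d x y, Cond1 a b c d ∧ 0 < x ∧ x < y ∧
    ((a + b = c + d ∧ (a + b = x ∨ a + b = y)) ∨
      ((x + y = a ∨ x + y = b) ∧ (x + y = c ∨ x + y = d))) ∧
    r = Rel2 k a b c d x y}

/-!
Reading a path from its source, `ι` of it is built by repeatedly multiplying on the left by the
orbit sum of an edge forest. Each of these products is the sum, with coefficient one, of a finite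
set of aligned labeled forests closed under rearranging parts, and such a sum is a sum of orbit
sums. For the inductive step, a rearrangement of the edge forest for `[a|b]` is a row of leaves
containing the tree `[a|b]`; its product with `Y` is defined only when the matching parts `A`, `B`
of `Y` have values `a < b`, and it joins `A` and `B` under a new root labeled `1`, which keeps the
forest aligned. That root locates the join, so distinct pairs of factors give distinct products,
and a rearrangement of a product is the product of rearranged factors.
-/

namespace LTree

@[simp] lemma value_shift (m : ℕ) (t : LTree) : (t.shift m).value = t.value := by
  induction t <;> simp [shift, value, *]

@[simp] lemma numNodes_shift (m : ℕ) (t : LTree) : (t.shift m).numNodes = t.numNodes := by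
  induction t <;> simp [shift, numNodes, *]

@[simp] lemma foliage_shift (m : ℕ) (t : LTree) : (t.shift m).foliage = t.foliage := by
  induction t <;> simp [shift, foliage, *]

lemma labels_shift (m : ℕ) (t : LTree) : (t.shift m).labels = t.labels.map (· + m) := by
  induction t <;> simp [shift, labels, *]

@[simp] lemma dec_shift_one (t : LTree) : (t.shift 1).dec = t := by
  induction t <;> simp [shift, dec, *]

lemma shift_one_injective : Function.Injective (shift 1) :=
  Function.LeftInverse.injective dec_shift_one

lemma Aligned.shift {t : LTree} (h : t.Aligned) (m : ℕ) : (t.shift m).Aligned := by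
  induction t with
  | leaf => trivial
  | node _ _ _ ih₁ ih₂ => exact ⟨by simpa using h.1, ih₁ h.2.1, ih₂ h.2.2⟩

lemma incrFrom.shift {t : LTree} {n : ℕ} (h : t.incrFrom n) (m : ℕ) :
    (t.shift m).incrFrom (n + m) := by
  induction t generalizing n with
  | leaf => trivial
  | node _ _ _ ih₁ ih₂ => exact ⟨by simpa using h.1, ih₁ h.2.1, ih₂ h.2.2⟩

lemma incrFrom.mono {t : LTree} {n n' : ℕ} (h : t.incrFrom n) (hle : n' ≤ n) :
    t.incrFrom n' := by
  cases t with
  | leaf => trivial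
  | node => exact ⟨hle.trans_lt h.1, h.2⟩

lemma shift_one_ne_node_one {t : LTree} (h : t.incrFrom 0) (u v : LTree) :
    t.shift 1 ≠ node 1 u v := by
  cases t with
  | leaf => simp [shift]
  | node i => simp only [shift, ne_eq, node.injEq]; have := h.1; omega

end LTree

open LTree

lemma IsLForest.perm {X X' : List LTree} (hX : IsLForest X) (h : X.Perm X') : IsLForest X' := by
  obtain ⟨hinc, hlab, hpos⟩ := hX
  have hlen : forestLen X' = forestLen X := ((h.map _).sum_eq).symm
  refine ⟨fun t ht => hinc t (h.mem_iff.2 ht), ?_, fun x hx => hpos x ?_⟩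
  · rw [hlen]
    exact (h.flatMap_right _).symm.trans hlab
  · exact (h.flatMap_right _).mem_iff.2 hx

lemma ForestAligned.perm {X X' : List LTree} (hX : ForestAligned X) (h : X.Perm X') :
    ForestAligned X' :=
  fun t ht => hX t (h.mem_iff.2 ht)

@[simp] lemma forestFoliage_leavesOf (c : List ℕ) : forestFoliage (leavesOf c) = c := by
  induction c <;> simp_all [forestFoliage, leavesOf, foliage]

lemma isLForest_leavesOf {c : List ℕ} (hc : ∀ x ∈ c, 0 < x) : IsLForest (leavesOf c) := by
  refine ⟨by simp [leavesOf, incrFrom], ?_, by simpa using hc⟩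
  simp [forestLabels, forestLen, leavesOf, List.flatMap_map, Function.comp_def, labels, numNodes]

lemma forestAligned_leavesOf (c : List ℕ) : ForestAligned (leavesOf c) := by
  simp [ForestAligned, leavesOf, Aligned]

lemma leavesOf_squash {L : List LTree} (h : ∀ t ∈ L, ∃ x, t = leaf x) :
    leavesOf (squash L) = L := by
  induction L with
  | nil => rfl
  | cons t L ih =>
    obtain ⟨x, rfl⟩ := h t (by simp)
    simpa [leavesOf, squash, value] using ih fun u hu => h u (by simp [hu])

lemma isLForest_node_one_cons {A B : LTree} {W : List LTree} (h : IsLForest (A :: B :: W)) :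
    IsLForest (node 1 (A.shift 1) (B.shift 1) :: W.map (shift 1)) := by
  obtain ⟨hinc, hlab, hpos⟩ := h
  refine ⟨?_, ?_, ?_⟩
  · simp only [List.mem_cons, List.mem_map] at hinc ⊢
    rintro t (rfl | ⟨u, hu, rfl⟩)
    · exact ⟨zero_lt_one, (hinc A (.inl rfl)).shift 1, (hinc B (.inr (.inl rfl))).shift 1⟩
    · exact ((hinc u (.inr (.inr hu))).shift 1).mono (Nat.zero_le _)
  · have hlen : forestLen (node 1 (A.shift 1) (B.shift 1) :: W.map (shift 1)) =
        forestLen (A :: B :: W) + 1 := by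
      simp only [forestLen, List.map_cons, numNodes, numNodes_shift, List.map_map,
        Function.comp_def, List.sum_cons]
      ring
    have hlabels : forestLabels (node 1 (A.shift 1) (B.shift 1) :: W.map (shift 1)) =
        1 :: (forestLabels (A :: B :: W)).map (· + 1) := by
      simp [forestLabels, labels, labels_shift, List.map_flatMap, List.flatMap_map]
    rw [hlen, hlabels, List.range'_succ]
    refine ((hlab.map (· + 1)).trans (.of_eq ?_)).cons 1
    simpa [add_comm] using List.map_add_range' (a := 1) 1 (forestLen (A :: B :: W)) 1
  · simpa [forestFoliage, foliage] using hpos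

def mergeParts (Y₁ : List LTree) (A B : LTree) (Y₂ : List LTree) : List LTree :=
  Y₁.map (shift 1) ++ node 1 (A.shift 1) (B.shift 1) :: Y₂.map (shift 1)

lemma perm_append_cons_cons {α : Type*} (Y₁ Y₂ : List α) (A B : α) :
    (Y₁ ++ A :: B :: Y₂).Perm (A :: B :: (Y₁ ++ Y₂)) :=
  List.perm_middle.trans (List.perm_middle.cons A)

lemma mergeParts_perm (Y₁ : List LTree) (A B : LTree) (Y₂ : List LTree) :
    (mergeParts Y₁ A B Y₂).Perm (node 1 (A.shift 1) (B.shift 1) :: (Y₁ ++ Y₂).map (shift 1)) := by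
  rw [List.map_append]
  exact List.perm_middle

lemma IsLForest.mergeParts {Y₁ Y₂ : List LTree} {A B : LTree}
    (h : IsLForest (Y₁ ++ A :: B :: Y₂)) : IsLForest (mergeParts Y₁ A B Y₂) :=
  (isLForest_node_one_cons (h.perm (perm_append_cons_cons Y₁ Y₂ A B))).perm
    (mergeParts_perm Y₁ A B Y₂).symm

lemma ForestAligned.mergeParts {Y₁ Y₂ : List LTree} {A B : LTree}
    (h : ForestAligned (Y₁ ++ A :: B :: Y₂)) (hAB : A.value < B.value) :
    ForestAligned (mergeParts Y₁ A B Y₂) := by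
  intro t ht
  simp only [_root_.mergeParts, List.mem_append, List.mem_cons, List.mem_map] at ht
  rcases ht with ⟨u, hu, rfl⟩ | rfl | ⟨u, hu, rfl⟩
  · exact (h u (by simp [hu])).shift 1
  · exact ⟨by simpa using hAB, (h A (by simp)).shift 1, (h B (by simp)).shift 1⟩
  · exact (h u (by simp [hu])).shift 1

lemma mergeParts_inj {Y₁ Y₂ Y₁' Y₂' : List LTree} {A B A' B' : LTree}
    (hY : ∀ t ∈ Y₁ ++ Y₂, t.incrFrom 0)
    (h : mergeParts Y₁ A B Y₂ = mergeParts Y₁' A' B' Y₂') :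
    Y₁ = Y₁' ∧ A = A' ∧ B = B' ∧ Y₂ = Y₂' := by
  have hnot : ∀ Y : List LTree, (∀ t ∈ Y, t.incrFrom 0) →
      node 1 (A'.shift 1) (B'.shift 1) ∉ Y.map (shift 1) := by
    intro Y hY hmem
    obtain ⟨t, ht, he⟩ := List.mem_map.1 hmem
    exact shift_one_ne_node_one (hY t ht) _ _ he
  obtain ⟨h₁, h₂, h₃⟩ := (List.append_cons_inj_of_notMem
    (hnot Y₁ fun t ht => hY t (by simp [ht])) (hnot Y₂ fun t ht => hY t (by simp [ht]))).1 h
  have hinj := List.map_injective_iff.2 shift_one_injective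
  simp only [node.injEq] at h₂
  exact ⟨hinj h₁, shift_one_injective h₂.2.1, shift_one_injective h₂.2.2, hinj h₃⟩

lemma exists_mergeParts_of_perm {Z Y₁ Y₂ : List LTree} {A B : LTree}
    (h : Z.Perm (mergeParts Y₁ A B Y₂)) :
    ∃ Y₁' Y₂', (Y₁' ++ Y₂').Perm (Y₁ ++ Y₂) ∧ Z = mergeParts Y₁' A B Y₂' := by
  have hM : node 1 (A.shift 1) (B.shift 1) ∈ mergeParts Y₁ A B Y₂ := by simp [mergeParts]
  obtain ⟨T₁, T₂, rfl⟩ := List.append_of_mem (h.mem_iff.2 hM)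
  have hT : (T₁ ++ T₂).Perm ((Y₁ ++ Y₂).map (shift 1)) :=
    (List.perm_middle.symm.trans (h.trans (mergeParts_perm Y₁ A B Y₂))).cons_inv
  have hshift : ∀ T : List LTree, (∀ t ∈ T, t ∈ (Y₁ ++ Y₂).map (shift 1)) →
      (T.map dec).map (shift 1) = T := by
    intro T hT
    rw [List.map_map]
    refine (List.map_congr_left fun t ht => ?_).trans (List.map_id T)
    obtain ⟨u, -, rfl⟩ := List.mem_map.1 (hT t ht)
    simp
  refine ⟨T₁.map dec, T₂.map dec, ?_, ?_⟩
  · simpa [List.map_map, Function.comp_def] using hT.map dec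
  · rw [mergeParts, hshift T₁ fun t ht => hT.mem_iff.1 (by simp [ht]),
      hshift T₂ fun t ht => hT.mem_iff.1 (by simp [ht])]

def edgeTree (a b : ℕ) : LTree := node 1 (leaf a) (leaf b)

def edgeForestAt (a b : ℕ) (c₁ c₂ : List ℕ) : List LTree :=
  leavesOf c₁ ++ edgeTree a b :: leavesOf c₂

lemma forestFoliage_edgeForestAt (a b : ℕ) (c₁ c₂ : List ℕ) :
    forestFoliage (edgeForestAt a b c₁ c₂) = c₁ ++ a :: b :: c₂ := by
  simpa [edgeForestAt, edgeTree, forestFoliage, foliage] using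
    congrArg₂ (· ++ a :: b :: ·) (forestFoliage_leavesOf c₁) (forestFoliage_leavesOf c₂)

lemma graftForest_leavesOf_append (c : List ℕ) (R W₁ W₂ : List LTree)
    (h : c.length = W₁.length) :
    graftForest (leavesOf c ++ R) (W₁ ++ W₂) = W₁ ++ graftForest R W₂ := by
  induction c generalizing W₁ with
  | nil => simp [leavesOf, List.eq_nil_of_length_eq_zero h.symm]
  | cons x c ih =>
    obtain ⟨w, W₁, rfl⟩ := List.exists_cons_of_length_eq_add_one h.symm
    simpa [leavesOf, graftForest, graft] using ih W₁ (by simpa using h)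

lemma bullet_edgeForestAt (a b : ℕ) (Y₁ Y₂ : List LTree) (A B : LTree) :
    bullet (edgeForestAt a b (squash Y₁) (squash Y₂)) (Y₁ ++ A :: B :: Y₂) =
      mergeParts Y₁ A B Y₂ := by
  have hlen : forestLen (edgeForestAt a b (squash Y₁) (squash Y₂)) = 1 := by
    simp [forestLen, edgeForestAt, edgeTree, leavesOf, numNodes, Function.comp_def]
  have hleaves := graftForest_leavesOf_append (squash Y₂) [] (Y₂.map (shift 1)) []
    (by simp [squash])
  simp only [List.append_nil, graftForest] at hleaves
  rw [bullet, hlen, List.map_append, edgeForestAt,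
    graftForest_leavesOf_append _ _ _ _ (by simp [squash])]
  simp [graftForest, edgeTree, graft, hleaves, mergeParts]

lemma exists_edgeForestAt_of_perm {a b : ℕ} {c : List ℕ} {X Y : List LTree}
    (hX : X.Perm (edgeTree a b :: leavesOf c)) (hXY : forestFoliage X = squash Y) :
    ∃ Y₁ A B Y₂, Y = Y₁ ++ A :: B :: Y₂ ∧ A.value = a ∧ B.value = b ∧
      X = edgeForestAt a b (squash Y₁) (squash Y₂) := by
  obtain ⟨L₁, L₂, rfl⟩ := List.append_of_mem (hX.mem_iff.2 List.mem_cons_self)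
  have hleaf : ∀ t ∈ L₁ ++ L₂, ∃ x, t = leaf x := by
    intro t ht
    obtain ⟨x, -, rfl⟩ := List.mem_map.1 ((List.perm_middle.symm.trans hX).cons_inv.mem_iff.1 ht)
    exact ⟨x, rfl⟩
  have hX' : L₁ ++ edgeTree a b :: L₂ = edgeForestAt a b (squash L₁) (squash L₂) := by
    rw [edgeForestAt, leavesOf_squash fun t ht => hleaf t (by simp [ht]),
      leavesOf_squash fun t ht => hleaf t (by simp [ht])]
  rw [hX', forestFoliage_edgeForestAt, squash] at hXY
  obtain ⟨Y₁, R, rfl, h₁, hR⟩ := List.map_eq_append_iff.1 hXY.symm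
  obtain ⟨A, R, rfl, hA, hR⟩ := List.map_eq_cons_iff.1 hR
  obtain ⟨B, Y₂, rfl, hB, h₂⟩ := List.map_eq_cons_iff.1 hR
  exact ⟨Y₁, A, B, Y₂, rfl, hA, hB, hX'.trans (congrArg₂ _ h₁.symm h₂.symm)⟩

def AlignedPolyaClosed (S : Finset (List LTree)) : Prop :=
  (∀ Z ∈ S, IsLForest Z ∧ ForestAligned Z) ∧ ∀ Z ∈ S, ∀ Z', Z.Perm Z' → Z' ∈ S

lemma sum_single_mem_LplusSpan (k : Type) [Semiring k] {S : Finset (List LTree)}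
    (hS : AlignedPolyaClosed S) : ∑ Z ∈ S, Finsupp.single Z (1 : k) ∈ LplusSpan k := by
  classical
  rw [Finset.sum_partition (List.isSetoid LTree)]
  refine Submodule.sum_mem _ fun q hq => ?_
  obtain ⟨Z, hZ, rfl⟩ := Finset.mem_image.1 hq
  have horbit : {Y ∈ S | ⟦Y⟧ = (⟦Z⟧ : Quotient (List.isSetoid LTree))} =
      Z.permutations.toFinset := by
    ext Y
    simp only [Finset.mem_filter, Quotient.eq, List.mem_toFinset, List.mem_permutations]
    exact ⟨And.right, fun h => ⟨hS.2 Z hZ Y h.symm, h⟩⟩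
  rw [horbit]
  exact Submodule.subset_span ⟨Z, (hS.1 Z hZ).1, (hS.1 Z hZ).2, rfl⟩

lemma sum_single_one_sum {k β M : Type} [Semiring k] [DecidableEq β] [AddCommMonoid M]
    (T : Finset β) (F : β → k → M) (hF : ∀ x, F x 0 = 0) :
    (∑ x ∈ T, Finsupp.single x (1 : k)).sum F = ∑ x ∈ T, F x 1 := by
  have happly : ∀ y, (∑ x ∈ T, Finsupp.single x (1 : k)) y = if y ∈ T then 1 else 0 := by
    intro y
    simp [Finsupp.finsetSum_apply, Finsupp.single_apply]
  rw [Finsupp.sum_of_support_subset _ (fun y hy => ?_) F fun x _ => hF x]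
  · exact Finset.sum_congr rfl fun x hx => by rw [happly, if_pos hx]
  · by_contra hyT
    exact Finsupp.mem_support_iff.1 hy (by rw [happly, if_neg hyT])

lemma mulL_sum_single (k : Type) [Semiring k] (T S : Finset (List LTree)) :
    mulL k (∑ X ∈ T, Finsupp.single X 1) (∑ Y ∈ S, Finsupp.single Y 1) =
      ∑ X ∈ T, ∑ Y ∈ S,
        if forestFoliage X = squash Y then Finsupp.single (bullet X Y) (1 : k) else 0 := by
  classical
  rw [mulL, sum_single_one_sum _ _ fun X => by simp]
  refine Finset.sum_congr rfl fun X _ => ?_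
  rw [sum_single_one_sum _ _ fun Y => by simp]
  simp

lemma exists_pair_of_perm_bullet {a b : ℕ} {c : List ℕ} {S : Finset (List LTree)}
    (hS : AlignedPolyaClosed S) {X Y Z : List LTree}
    (hX : X.Perm (edgeTree a b :: leavesOf c)) (hY : Y ∈ S) (hXY : forestFoliage X = squash Y)
    (hZ : Z.Perm (bullet X Y)) :
    ∃ X' Y', X'.Perm (edgeTree a b :: leavesOf c) ∧ Y' ∈ S ∧ forestFoliage X' = squash Y' ∧
      bullet X' Y' = Z := by
  obtain ⟨Y₁, A, B, Y₂, rfl, rfl, rfl, rfl⟩ := exists_edgeForestAt_of_perm hX hXY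
  rw [bullet_edgeForestAt] at hZ
  obtain ⟨Y₁', Y₂', hperm, rfl⟩ := exists_mergeParts_of_perm hZ
  have hsquash : (squash Y₁' ++ squash Y₂').Perm (squash Y₁ ++ squash Y₂) := by
    simpa [squash] using hperm.map value
  refine ⟨edgeForestAt A.value B.value (squash Y₁') (squash Y₂'), Y₁' ++ A :: B :: Y₂', ?_,
    hS.2 _ hY _ ?_, ?_, bullet_edgeForestAt _ _ _ _ _ _⟩
  · refine List.Perm.trans ?_ hX
    have h := (hsquash.map leaf).cons (edgeTree A.value B.value)
    rw [List.map_append, List.map_append] at h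
    exact List.perm_middle.trans (h.trans List.perm_middle.symm)
  · exact (perm_append_cons_cons Y₁ Y₂ A B).trans
      (((hperm.symm.cons B).cons A).trans (perm_append_cons_cons Y₁' Y₂' A B).symm)
  · simp [forestFoliage_edgeForestAt, squash]

lemma mulL_pol_edge_sum (k : Type) [Semiring k] {a b : ℕ} (hab : a < b) (c : List ℕ)
    {S : Finset (List LTree)} (hS : AlignedPolyaClosed S) :
    ∃ S', AlignedPolyaClosed S' ∧
      mulL k (pol k (edgeTree a b :: leavesOf c)) (∑ Y ∈ S, Finsupp.single Y 1) =
        ∑ Z ∈ S', Finsupp.single Z 1 := by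
  classical
  set P := ((edgeTree a b :: leavesOf c).permutations.toFinset ×ˢ S).filter
    fun z => forestFoliage z.1 = squash z.2 with hP
  have hmemP : ∀ z, z ∈ P ↔ z.1.Perm (edgeTree a b :: leavesOf c) ∧ z.2 ∈ S ∧
      forestFoliage z.1 = squash z.2 := by
    simp [hP, and_assoc]
  refine ⟨P.image fun z => bullet z.1 z.2, ⟨?_, ?_⟩, ?_⟩
  · simp only [Finset.mem_image, hmemP]
    rintro _ ⟨⟨X, Y⟩, ⟨hX, hY, hXY⟩, rfl⟩
    obtain ⟨Y₁, A, B, Y₂, rfl, rfl, rfl, rfl⟩ := exists_edgeForestAt_of_perm hX hXY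
    rw [bullet_edgeForestAt]
    exact ⟨(hS.1 _ hY).1.mergeParts, (hS.1 _ hY).2.mergeParts hab⟩
  · simp only [Finset.mem_image, hmemP]
    rintro _ ⟨⟨X, Y⟩, ⟨hX, hY, hXY⟩, rfl⟩ Z hZ
    obtain ⟨X', Y', h⟩ := exists_pair_of_perm_bullet hS hX hY hXY hZ.symm
    exact ⟨(X', Y'), ⟨h.1, h.2.1, h.2.2.1⟩, h.2.2.2⟩
  · rw [pol, mulL_sum_single, ← Finset.sum_product', ← Finset.sum_filter, ← hP,
      Finset.sum_image]
    simp only [Set.InjOn, Finset.mem_coe, hmemP]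
    rintro ⟨X, Y⟩ ⟨hX, hY, hXY⟩ ⟨X', Y'⟩ ⟨hX', -, hXY'⟩ h
    obtain ⟨Y₁, A, B, Y₂, rfl, rfl, rfl, rfl⟩ := exists_edgeForestAt_of_perm hX hXY
    obtain ⟨Y₁', A', B', Y₂', rfl, -, -, rfl⟩ := exists_edgeForestAt_of_perm hX' hXY'
    simp only [bullet_edgeForestAt] at h
    have hinc : ∀ t ∈ Y₁ ++ Y₂, t.incrFrom 0 := fun t ht =>
      (hS.1 _ hY).1.1 t (by simp only [List.mem_append, List.mem_cons] at ht ⊢; tauto)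
    obtain ⟨rfl, rfl, rfl, rfl⟩ := mergeParts_inj hinc h
    rfl

lemma alignedPolyaClosed_leavesOf {c : List ℕ} (hc : ∀ x ∈ c, 0 < x) :
    AlignedPolyaClosed (leavesOf c).permutations.toFinset := by
  simp only [AlignedPolyaClosed, List.mem_toFinset, List.mem_permutations]
  exact ⟨fun Z hZ => ⟨(isLForest_leavesOf hc).perm hZ.symm,
    (forestAligned_leavesOf c).perm hZ.symm⟩, fun Z hZ Z' h => h.symm.trans hZ⟩

lemma iotaSteps_eq_sum (k : Type) [Semiring k] (steps : List (ℕ × ℕ)) :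
    ∀ p : Multiset ℕ, (∀ x ∈ p, 0 < x) → (∀ s ∈ steps, 0 < s.1 ∧ s.1 < s.2) →
      ∃ S, AlignedPolyaClosed S ∧ iotaSteps k p steps = ∑ Z ∈ S, Finsupp.single Z 1 := by
  induction steps with
  | nil =>
    intro p hp _
    exact ⟨_, alignedPolyaClosed_leavesOf fun x hx => hp x (Multiset.mem_toList.1 hx), rfl⟩
  | cons s steps ih =>
    intro p hp hsteps
    obtain ⟨ha, hab⟩ := hsteps s List.mem_cons_self
    have hp' : ∀ x ∈ applyStep s.1 s.2 p, 0 < x := by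
      simp only [applyStep, Multiset.mem_cons]
      rintro x (rfl | rfl | hx)
      exacts [ha, ha.trans hab, hp x (Multiset.mem_of_mem_erase hx)]
    obtain ⟨S, hS, hsum⟩ := ih _ hp' fun t ht => hsteps t (List.mem_cons_of_mem s ht)
    obtain ⟨S', hS', hsum'⟩ := mulL_pol_edge_sum k hab (p.erase (s.1 + s.2)).toList hS
    exact ⟨S', hS', by rw [iotaSteps, hsum]; exact hsum'⟩

lemma iotaP_mem_LplusSpan (k : Type) [Semiring k] {P : QPath} (hP : P.Valid) :
    iotaP k P ∈ LplusSpan k := by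
  obtain ⟨S, hS, hsum⟩ := iotaSteps_eq_sum k P.steps P.dest hP.1 hP.2.1
  rw [iotaP, hsum]
  exact sum_single_mem_LplusSpan k hS

theorem iota_image_aligned_general (k : Type) [Field k]
    (x : QPath →₀ k) (hx : ∀ P ∈ x.support, P.Valid) :
    iotaLinM k x ∈ LplusSpan k := by
  rw [iotaLinM, Finsupp.lift_apply]
  exact Submodule.finsuppSum_mem _ _ _ _ fun P hP =>
    Submodule.smul_mem _ _ (iotaP_mem_LplusSpan k (hx P (Finsupp.mem_support_iff.2 hP)))

/-- **Lemma `ImageIotaAligned`.** `ι(kQ) ⊆ kℒ⁺`: the image under `ι` of any element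
of `kQ` lies in the span of the Pólya orbit sums of aligned labeled forests. -/
theorem iota_image_aligned (k : Type) [Field k] [CharZero k]
    (x : QPath →₀ k) (hx : ∀ P ∈ x.support, P.Valid) :
    iotaLinM k x ∈ LplusSpan k :=
  iota_image_aligned_general k x hx
end

section
/- The composite E ∘ ι: kQ → kℳ^+ is surjective: every Pólya orbit sum of an aligned unlabeled forest lies in E(ι(kQ)). -/
set_option maxHeartbeats 1000000

/-!
Induction on the sum of the squares of the node counts of the parts of `Z`. If all parts are
leaves, `[Z]` is `E ι` of the trivial path at the vertex `s(Z)`. Otherwise let `(A, B)` be a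
non-leaf part of minimal value, `a = v(A) < b = v(B)`, and `R` the remaining parts. By
induction `[A, B, R]` is `E ι` of paths ending at `s(A, B, R)`; prepending the edge `[a|b]`
multiplies this by the orbit sum of the cherry `(a, b)` next to the leaves `s(R)`. The
coefficient of a forest `W` in that product counts the parts of `W` that split into two parts
of `A, B, R` of values `a` and `b`. Hence it is invariant under rearranging `W`, it is a
positive integer at `Z` (so nonzero in characteristic zero), and by the minimality of
`(A, B)` every forest `W` in the support is aligned and is either a rearrangement of `Z` or
has a smaller measure. Subtracting the orbit sums of the latter, which are covered by
induction, isolates `[Z]`.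
-/

open Finsupp

namespace UTree

def cherry (a b : ℕ) : UTree := node (leaf a) (leaf b)

lemma value_pos {t : UTree} (h : ∀ x ∈ t.foliage, 0 < x) : 0 < t.value := by
  induction t with
  | leaf x => exact h x (by simp [foliage])
  | node t₁ t₂ ih₁ _ =>
    have := ih₁ fun x hx => h x (by simp [foliage, hx])
    simp only [value]
    omega

lemma eq_leaf_of_numNodes_eq_zero {t : UTree} (h : t.numNodes = 0) : t = leaf t.value := by
  cases t with
  | leaf x => rfl
  | node t₁ t₂ => simp [numNodes] at h

lemma map_leaf_map_value {X : List UTree} (h : ∀ t ∈ X, t.numNodes = 0) :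
    (X.map value).map leaf = X := by
  conv_rhs => rw [← List.map_id X]
  simp only [List.map_map]
  exact List.map_congr_left fun t ht => (eq_leaf_of_numNodes_eq_zero (h t ht)).symm

lemma graft_snd (t : UTree) (ys : List UTree) : (t.graft ys).2 = ys.drop t.foliage.length := by
  induction t generalizing ys with
  | leaf x => cases ys <;> simp [graft, foliage]
  | node t₁ t₂ ih₁ ih₂ => simp only [graft, foliage, List.length_append, ih₂, ih₁, List.drop_drop]

end UTree

open UTree

lemma List.eq_of_map_eq_of_injOn {α β : Type*} {f : α → β} {s : Set α} (hf : Set.InjOn f s)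
    {X₁ X₂ : List α} (h₁ : ∀ x ∈ X₁, x ∈ s) (h₂ : ∀ x ∈ X₂, x ∈ s)
    (h : X₁.map f = X₂.map f) : X₁ = X₂ := by
  induction X₁ generalizing X₂ with
  | nil => simpa [eq_comm] using h
  | cons x X₁ ih =>
    cases X₂ with
    | nil => simp at h
    | cons y X₂ =>
      simp only [List.map_cons, List.cons.injEq] at h
      simp only [List.mem_cons, forall_eq_or_imp] at h₁ h₂
      rw [hf h₁.1 h₂.1 h.1, ih h₁.2 h₂.2 h.2]

lemma Finset.sum_permutations_map {α β M : Type*} [DecidableEq α] [DecidableEq β]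
    [AddCommMonoid M] {f : α → β} {L : List α} (hf : Set.InjOn f {x | x ∈ L})
    (F : List β → M) :
    ∑ X ∈ L.permutations.toFinset, F (X.map f) = ∑ X ∈ (L.map f).permutations.toFinset, F X := by
  have himage : (L.map f).permutations.toFinset = L.permutations.toFinset.image (List.map f) := by
    ext; simp [← List.map_permutations]
  rw [himage, Finset.sum_image]
  intro X₁ h₁ X₂ h₂ h
  simp only [Finset.mem_coe, List.mem_toFinset, List.mem_permutations] at h₁ h₂
  exact List.eq_of_map_eq_of_injOn hf (fun x hx => h₁.subset hx) (fun x hx => h₂.subset hx) h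

lemma List.perm_append_cons_cons {α : Type*} (l₁ l₂ : List α) (u v : α) :
    (l₁ ++ u :: v :: l₂).Perm (u :: v :: (l₁ ++ l₂)) :=
  List.perm_middle.trans (List.perm_middle.cons u)

lemma List.mem_findIdxs_iff_exists_append {α : Type*} {p : α → Bool} {W : List α} {i : ℕ} :
    i ∈ W.findIdxs p ↔ ∃ Wa t Wb, W = Wa ++ t :: Wb ∧ Wa.length = i ∧ p t := by
  rw [List.mem_findIdxs_iff_exists_getElem_pos]
  constructor
  · rintro ⟨hi, hp⟩
    refine ⟨W.take i, W[i], W.drop (i + 1), ?_, by simp [hi.le], hp⟩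
    rw [List.cons_getElem_drop_succ, List.take_append_drop]
  · rintro ⟨Wa, t, Wb, rfl, rfl, hp⟩
    exact ⟨by simp, by simpa using hp⟩

lemma List.card_toFinset_findIdxs {α : Type*} (p : α → Bool) (W : List α) :
    (W.findIdxs p).toFinset.card = W.countP p := by
  rw [List.toFinset_card_of_nodup List.nodup_findIdxs, List.length_findIdxs]

section GuardedMul

variable (k : Type*) [CommSemiring k] {α β γ : Type*} (p : α → β → Prop)
  [∀ X Y, Decidable (p X Y)] (μ : α → β → γ)

noncomputable def guardedMul : (α →₀ k) →ₗ[k] (β →₀ k) →ₗ[k] (γ →₀ k) :=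
  Finsupp.lift _ k α fun X => Finsupp.lift _ k β fun Y => if p X Y then single (μ X Y) 1 else 0

lemma guardedMul_apply (f : α →₀ k) (g : β →₀ k) :
    guardedMul k p μ f g =
      f.sum fun X a => g.sum fun Y b => if p X Y then single (μ X Y) (a * b) else 0 := by
  simp only [guardedMul, Finsupp.lift_apply, Finsupp.sum, LinearMap.sum_apply,
    LinearMap.smul_apply, Finset.smul_sum]
  refine Finset.sum_congr rfl fun X _ => Finset.sum_congr rfl fun Y _ => ?_
  split_ifs <;> simp [mul_comm]

lemma guardedMul_single_single (X : α) (Y : β) (a b : k) :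
    guardedMul k p μ (single X a) (single Y b) =
      if p X Y then single (μ X Y) (a * b) else 0 := by
  simp [guardedMul_apply]

end GuardedMul

lemma foliageU_map_leaf (l : List ℕ) : foliageU (l.map leaf) = l := by
  induction l with
  | nil => rfl
  | cons c l ih => simpa [foliageU, UTree.foliage] using ih

lemma foliageU_cherry_factor (a b : ℕ) (l₁ l₂ : List ℕ) :
    foliageU (l₁.map leaf ++ cherry a b :: l₂.map leaf) = l₁ ++ a :: b :: l₂ := by
  rw [foliageU, List.flatMap_append, List.flatMap_cons, ← foliageU, ← foliageU, foliageU_map_leaf,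
    foliageU_map_leaf]
  rfl

lemma graftForestU_map_leaf (cs : List ℕ) (ys : List UTree) (h : cs.length ≤ ys.length) :
    graftForestU (cs.map leaf) ys = ys.take cs.length := by
  induction cs generalizing ys with
  | nil => simp [graftForestU]
  | cons c cs ih =>
    cases ys with
    | nil => simp at h
    | cons y ys =>
      simp only [List.map_cons, graftForestU, graft, List.length_cons, List.take_succ_cons]
      rw [ih ys (by simpa using h)]

lemma graftForestU_append (X₁ X₂ ys : List UTree) :
    graftForestU (X₁ ++ X₂) ys
      = graftForestU X₁ ys ++ graftForestU X₂ (ys.drop (foliageU X₁).length) := by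
  induction X₁ generalizing ys with
  | nil => simp [graftForestU, foliageU]
  | cons t X₁ ih =>
    simp only [List.cons_append, graftForestU, ih, graft_snd, List.drop_drop, foliageU,
      List.flatMap_cons, List.length_append]

lemma bulletU_cherry (a b : ℕ) (Ya Yb : List UTree) (u v : UTree) :
    bulletU ((Ya.map value).map leaf ++ cherry a b :: (Yb.map value).map leaf)
      (Ya ++ u :: v :: Yb) = Ya ++ node u v :: Yb := by
  rw [bulletU, graftForestU_append, foliageU_map_leaf, List.length_map,
    graftForestU_map_leaf _ _ (by simp), List.length_map, List.take_left, List.drop_left]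
  simp only [graftForestU, cherry, graft]
  rw [graftForestU_map_leaf _ _ (by simp), List.length_map, List.take_length]


section Erasing

lemma eraseT_shift (m : ℕ) (t : LTree) : eraseT (t.shift m) = eraseT t := by
  induction t with
  | leaf x => rfl
  | node i t₁ t₂ ih₁ ih₂ => simp [LTree.shift, eraseT, ih₁, ih₂]

lemma eraseT_graft (t : LTree) (ys : List LTree) :
    eraseT (t.graft ys).1 = ((eraseT t).graft (ys.map eraseT)).1 ∧
      (t.graft ys).2.map eraseT = ((eraseT t).graft (ys.map eraseT)).2 := by
  induction t generalizing ys with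
  | leaf x => cases ys <;> simp [LTree.graft, UTree.graft, eraseT]
  | node i t₁ t₂ ih₁ ih₂ =>
    obtain ⟨h₁, h₁'⟩ := ih₁ ys
    obtain ⟨h₂, h₂'⟩ := ih₂ (t₁.graft ys).2
    rw [h₁'] at h₂ h₂'
    exact ⟨by simp only [LTree.graft, UTree.graft, eraseT, h₁, h₂],
      by simp only [LTree.graft, UTree.graft, eraseT, h₂']⟩

lemma eraseF_graftForest (X ys : List LTree) :
    eraseF (graftForest X ys) = graftForestU (eraseF X) (ys.map eraseT) := by
  induction X generalizing ys with
  | nil => rfl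
  | cons t X ih =>
    obtain ⟨h₁, h₂⟩ := eraseT_graft t ys
    simp only [graftForest, graftForestU, eraseF, List.map_cons] at ih ⊢
    rw [← h₁, ← h₂, ih]

lemma eraseF_bullet (X Y : List LTree) :
    eraseF (bullet X Y) = bulletU (eraseF X) (eraseF Y) := by
  rw [bullet, bulletU, eraseF_graftForest, List.map_map]
  congr 2
  exact funext (eraseT_shift _)

lemma foliage_eraseT (t : LTree) : (eraseT t).foliage = t.foliage := by
  induction t with
  | leaf x => rfl
  | node i t₁ t₂ ih₁ ih₂ => simp [eraseT, UTree.foliage, LTree.foliage, ih₁, ih₂]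

lemma value_eraseT (t : LTree) : (eraseT t).value = t.value := by
  induction t with
  | leaf x => rfl
  | node i t₁ t₂ ih₁ ih₂ => simp [eraseT, UTree.value, LTree.value, ih₁, ih₂]

lemma foliageU_eraseF (X : List LTree) : foliageU (eraseF X) = forestFoliage X := by
  simp [foliageU, forestFoliage, eraseF, List.flatMap_map, foliage_eraseT]

lemma squashU_eraseF (X : List LTree) : squashU (eraseF X) = squash X := by
  simp [squashU, squash, eraseF, value_eraseT]

lemma eraseT_injOn_labels_eq (c : ℕ) : Set.InjOn eraseT {t | ∀ i ∈ t.labels, i = c} := by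
  intro s hs t ht h
  induction s generalizing t with
  | leaf x => cases t <;> simp_all [eraseT]
  | node i s₁ s₂ ih₁ ih₂ =>
    cases t with
    | leaf y => simp [eraseT] at h
    | node j t₁ t₂ =>
      simp only [Set.mem_ofPred_eq, LTree.labels, List.mem_cons, List.mem_append] at hs ht
      simp only [eraseT, UTree.node.injEq] at h
      rw [hs i (.inl rfl), ht j (.inl rfl),
        ih₁ (fun l hl => hs l (.inr (.inl hl))) (fun l hl => ht l (.inr (.inl hl))) h.1,
        ih₂ (fun l hl => hs l (.inr (.inr hl))) (fun l hl => ht l (.inr (.inr hl))) h.2]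

lemma eraseT_injOn_leavesOf (l : List ℕ) : Set.InjOn eraseT {t | t ∈ leavesOf l} :=
  (eraseT_injOn_labels_eq 0).mono fun t ht => by
    obtain ⟨x, -, rfl⟩ := List.mem_map.1 ht
    simp [LTree.labels]

lemma eraseT_injOn_edgeForest (a b : ℕ) (q : Multiset ℕ) :
    Set.InjOn eraseT {t | t ∈ edgeForest a b q} :=
  (eraseT_injOn_labels_eq 1).mono fun t ht => by
    rcases List.mem_cons.1 ht with rfl | ht
    · simp [LTree.labels]
    · obtain ⟨x, -, rfl⟩ := List.mem_map.1 ht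
      simp [LTree.labels]

lemma eraseF_edgeForest (a b : ℕ) (q : Multiset ℕ) :
    eraseF (edgeForest a b q) = cherry a b :: (q.erase (a + b)).toList.map leaf := by
  simp only [eraseF, edgeForest, leavesOf, List.map_cons, List.map_map]
  rfl

variable (k : Type) [CommSemiring k]

lemma mulM_eq_guardedMul (f g : List UTree →₀ k) :
    mulM k f g = guardedMul k (fun X Y => foliageU X = squashU Y) bulletU f g :=
  (guardedMul_apply ..).symm

lemma mulL_eq_guardedMul (f g : List LTree →₀ k) :
    mulL k f g = guardedMul k (fun X Y => forestFoliage X = squash Y) bullet f g :=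
  (guardedMul_apply ..).symm

lemma EL_single (X : List LTree) (a : k) : EL k (single X a) = single (eraseF X) a := by
  simp [EL]

lemma EL_pol {L : List LTree} (hL : Set.InjOn eraseT {t | t ∈ L}) :
    EL k (pol k L) = polU k (eraseF L) := by
  simp only [pol, polU, map_sum, EL_single]
  exact Finset.sum_permutations_map hL fun W => single W 1

lemma EL_mulL_pol {L : List LTree} (hL : Set.InjOn eraseT {t | t ∈ L}) (v : List LTree →₀ k) :
    EL k (mulL k (pol k L) v) = mulM k (polU k (eraseF L)) (EL k v) := by
  rw [mulL_eq_guardedMul, mulM_eq_guardedMul]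
  induction v using Finsupp.induction_linear with
  | zero => simp
  | add v w hv hw => simp only [map_add, hv, hw]
  | single Y b =>
    simp only [pol, polU, map_sum, LinearMap.sum_apply, EL_single, guardedMul_single_single]
    rw [show eraseF L = L.map eraseT from rfl, ← Finset.sum_permutations_map hL]
    refine Finset.sum_congr rfl fun X _ => ?_
    rw [apply_ite (EL k), map_zero, EL_single, eraseF_bullet, ← foliageU_eraseF,
      ← squashU_eraseF]
    rfl

end Erasing

section Paths

variable (k : Type) [CommSemiring k]

noncomputable def rangeEIota (q : Multiset ℕ) : Submodule k (List UTree →₀ k) :=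
  (supported k k {P : QPath | P.Valid ∧ P.dest = q}).map (EL k ∘ₗ iotaLinM k)

lemma iotaLinM_single (P : QPath) (c : k) : iotaLinM k (single P c) = c • iotaP k P := by
  simp [iotaLinM]

lemma polU_map_leaf_mem_rangeEIota {q : Multiset ℕ} (hq : ∀ x ∈ q, 0 < x) :
    polU k (q.toList.map leaf) ∈ rangeEIota k q := by
  refine ⟨single ⟨q, []⟩ 1, single_mem_supported k _ ⟨⟨hq, by simp, trivial⟩, rfl⟩, ?_⟩
  rw [LinearMap.comp_apply, iotaLinM_single, one_smul, iotaP, iotaSteps,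
    EL_pol k (eraseT_injOn_leavesOf _), eraseF, leavesOf, List.map_map]
  rfl

lemma QPath.Valid.cons {P : QPath} (hP : P.Valid) {a b : ℕ} (ha : 0 < a) (hab : a < b)
    {q : Multiset ℕ} (hq : ∀ x ∈ q, 0 < x) (habq : a + b ∈ q)
    (hdest : P.dest = applyStep a b q) : (⟨q, (a, b) :: P.steps⟩ : QPath).Valid := by
  obtain ⟨-, hsteps, hseq⟩ := hP
  refine ⟨hq, ?_, habq, hdest ▸ hseq⟩
  simpa [ha, hab] using hsteps

lemma iotaLinM_mapDomain_cons {a b : ℕ} {q : Multiset ℕ} {x : QPath →₀ k}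
    (hx : x ∈ supported k k {P : QPath | P.dest = applyStep a b q}) :
    iotaLinM k (x.mapDomain fun P => ⟨q, (a, b) :: P.steps⟩)
      = mulL k (pol k (edgeForest a b q)) (iotaLinM k x) := by
  rw [mulL_eq_guardedMul]
  rw [supported_eq_span_single] at hx
  induction hx using Submodule.span_induction with
  | mem y hy =>
    obtain ⟨P, hP, rfl⟩ := hy
    rw [mapDomain_single, iotaLinM_single, iotaLinM_single, map_smul, one_smul, one_smul,
      ← mulL_eq_guardedMul, iotaP, iotaP, iotaSteps, ← hP.out]
  | zero => simp
  | add y z _ _ hy hz => rw [mapDomain_add, map_add, map_add, map_add, hy, hz]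
  | smul c y _ hy => rw [mapDomain_smul, map_smul, map_smul, map_smul, hy]

lemma mulM_cherry_mem_rangeEIota {a b : ℕ} (ha : 0 < a) (hab : a < b) {q : Multiset ℕ}
    (hq : ∀ x ∈ q, 0 < x) (habq : a + b ∈ q) {y : List UTree →₀ k}
    (hy : y ∈ rangeEIota k (applyStep a b q)) :
    mulM k (polU k (cherry a b :: (q.erase (a + b)).toList.map leaf)) y ∈ rangeEIota k q := by
  obtain ⟨x, hx, rfl⟩ := hy
  refine ⟨x.mapDomain fun P => ⟨q, (a, b) :: P.steps⟩, ?_, ?_⟩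
  · simp only [SetLike.mem_coe, mem_supported] at hx ⊢
    intro P hP
    obtain ⟨P₀, hP₀, rfl⟩ := Finset.mem_image.1 (mapDomain_support hP)
    obtain ⟨hvalid, hdest⟩ := hx hP₀
    exact ⟨hvalid.cons ha hab hq habq hdest, rfl⟩
  · have hx' : x ∈ supported k k {P : QPath | P.dest = applyStep a b q} :=
      supported_mono (fun _ hP => hP.2) hx
    rw [LinearMap.comp_apply, iotaLinM_mapDomain_cons k hx',
      EL_mulL_pol k (eraseT_injOn_edgeForest a b q), eraseF_edgeForest]
    rfl

end Paths

lemma polU_apply (k : Type) [Semiring k] (L W : List UTree) :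
    polU k L W = if W.Perm L then 1 else 0 := by
  simp [polU, Finset.sum_apply', single_apply, List.mem_permutations]

lemma polU_perm (k : Type) [Semiring k] {L L' : List UTree} (h : L.Perm L') :
    polU k L = polU k L' := by
  ext W
  simp only [polU_apply, (⟨fun hW => hW.trans h, fun hW => hW.trans h.symm⟩ :
    W.Perm L ↔ W.Perm L')]

lemma mem_span_polU_of_perm_invariant {k : Type} [Ring k] (f : List UTree →₀ k)
    (hf : ∀ W W', W.Perm W' → f W = f W') :
    f ∈ Submodule.span k (polU k '' f.support) := by
  induction hn : f.support.card using Nat.strong_induction_on generalizing f with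
  | _ n ih =>
  obtain rfl | ⟨W₀, hW₀⟩ := eq_or_ne f 0 |>.imp id support_nonempty_iff.2
  · exact zero_mem _
  set g := f - f W₀ • polU k W₀
  have hg : ∀ W, g W = if W.Perm W₀ then 0 else f W := by
    intro W
    split_ifs with hW <;> simp [g, polU_apply, hW, hf W W₀]
  have hsupp : g.support ⊆ f.support.erase W₀ := by
    intro W hW
    rw [mem_support_iff, hg] at hW
    split_ifs at hW with hWW₀
    · exact absurd rfl hW
    · exact Finset.mem_erase.2 ⟨fun h => hWW₀ (h ▸ List.Perm.refl _), mem_support_iff.2 hW⟩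
  have hg_span : g ∈ Submodule.span k (polU k '' g.support) := by
    refine ih _ ?_ g (fun W W' hWW' => ?_) rfl
    · rw [← hn]
      exact (Finset.card_le_card hsupp).trans_lt (Finset.card_erase_lt_of_mem hW₀)
    · simp only [hg, hf W W' hWW', (⟨fun h => hWW'.symm.trans h, fun h => hWW'.trans h⟩ :
        W.Perm W₀ ↔ W'.Perm W₀)]
  have hg_le : Submodule.span k (polU k '' g.support) ≤ Submodule.span k (polU k '' f.support) :=
    Submodule.span_mono (Set.image_mono fun W hW => Finset.mem_of_mem_erase (hsupp hW))
  have hsum := add_mem (hg_le hg_span)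
    (Submodule.smul_mem _ (f W₀) (Submodule.subset_span ⟨W₀, hW₀, rfl⟩))
  rwa [sub_add_cancel] at hsum

lemma polU_mem_of_perm_invariant {k : Type} [Field k] {V : Submodule k (List UTree →₀ k)}
    {f : List UTree →₀ k} (hfV : f ∈ V) (hf : ∀ W W', W.Perm W' → f W = f W')
    {Z : List UTree} (hZ : f Z ≠ 0) (hV : ∀ W, f W ≠ 0 → ¬ W.Perm Z → polU k W ∈ V) :
    polU k Z ∈ V := by
  set g := f - f Z • polU k Z
  have hg : ∀ W, g W = if W.Perm Z then 0 else f W := by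
    intro W
    split_ifs with hW <;> simp [g, polU_apply, hW, hf W Z]
  have hgV : g ∈ V := by
    refine Submodule.span_le.2 ?_ (mem_span_polU_of_perm_invariant g fun W W' hWW' => ?_)
    · rintro _ ⟨W, hW, rfl⟩
      rw [Finset.mem_coe, mem_support_iff, hg] at hW
      split_ifs at hW with hWZ
      · exact absurd rfl hW
      · exact hV W hW hWZ
    · simp only [hg, hf W W' hWW', (⟨fun h => hWW'.symm.trans h, fun h => hWW'.trans h⟩ :
        W.Perm Z ↔ W'.Perm Z)]
  have hZ_eq : polU k Z = (f Z)⁻¹ • (f - g) := by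
    rw [sub_sub_cancel, smul_smul, inv_mul_cancel₀ hZ, one_smul]
  rw [hZ_eq]
  exact V.smul_mem _ (V.sub_mem hfV hgV)


section Counting

def IsJoinIn (a b : ℕ) (Y W : Multiset UTree) (t : UTree) : Prop :=
  ∃ u v, t = node u v ∧ u.value = a ∧ v.value = b ∧ u ::ₘ v ::ₘ W.erase t = Y

variable {a b : ℕ} {ds : List ℕ} {Y₀ : List UTree}

lemma isJoinIn_append_iff {Wa Wb : List UTree} {t : UTree} :
    IsJoinIn a b ↑Y₀ ↑(Wa ++ t :: Wb) t ↔
      ∃ u v, t = node u v ∧ u.value = a ∧ v.value = b ∧ (u :: v :: (Wa ++ Wb)).Perm Y₀ := by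
  have hW : (↑(Wa ++ t :: Wb) : Multiset UTree) = t ::ₘ ↑(Wa ++ Wb) :=
    Multiset.coe_eq_coe.2 List.perm_middle
  simp only [IsJoinIn, hW, Multiset.erase_cons_head]
  simp only [Multiset.cons_coe, Multiset.coe_eq_coe]

lemma eq_append_of_perm_cherry_cons {X : List UTree} (hX : X.Perm (cherry a b :: ds.map leaf)) :
    ∃ l₁ l₂ : List ℕ, X = l₁.map leaf ++ cherry a b :: l₂.map leaf := by
  obtain ⟨s, t, rfl⟩ := List.append_of_mem (hX.symm.subset List.mem_cons_self)
  have hst : (s ++ t).Perm (ds.map leaf) := (List.perm_middle.symm.trans hX).cons_inv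
  have hleaves : ∀ x ∈ s ++ t, x.numNodes = 0 := fun x hx => by
    obtain ⟨c, -, rfl⟩ := List.mem_map.1 (hst.subset hx)
    rfl
  exact ⟨s.map value, t.map value,
    by rw [map_leaf_map_value fun x hx => hleaves x (List.mem_append_left _ hx),
      map_leaf_map_value fun x hx => hleaves x (List.mem_append_right _ hx)]⟩

variable (a b ds Y₀) in
def cherryFactorizations (W : List UTree) : Finset (List UTree × List UTree) :=
  ((cherry a b :: ds.map leaf).permutations.toFinset ×ˢ Y₀.permutations.toFinset).filter
    fun p => foliageU p.1 = squashU p.2 ∧ bulletU p.1 p.2 = W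

lemma mem_cherryFactorizations_iff (hY₀ : (Y₀.map value).Perm (a :: b :: ds))
    {X Y W : List UTree} :
    (X, Y) ∈ cherryFactorizations a b ds Y₀ W ↔
      ∃ Wa u v Wb, W = Wa ++ node u v :: Wb ∧
        X = (Wa.map value).map leaf ++ cherry a b :: (Wb.map value).map leaf ∧
        Y = Wa ++ u :: v :: Wb ∧ u.value = a ∧ v.value = b ∧ (u :: v :: (Wa ++ Wb)).Perm Y₀ := by
  simp only [cherryFactorizations, Finset.mem_filter, Finset.mem_product, List.mem_toFinset,
    List.mem_permutations]
  constructor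
  · rintro ⟨⟨hX, hY⟩, hfol, rfl⟩
    obtain ⟨l₁, l₂, rfl⟩ := eq_append_of_perm_cherry_cons hX
    rw [foliageU_cherry_factor, eq_comm, squashU, List.map_eq_append_iff] at hfol
    obtain ⟨Ya, rest, rfl, rfl, hrest⟩ := hfol
    obtain ⟨u, rest, rfl, hu, hrest⟩ := List.map_eq_cons_iff.1 hrest
    obtain ⟨v, Yb, rfl, hv, rfl⟩ := List.map_eq_cons_iff.1 hrest
    exact ⟨Ya, u, v, Yb, bulletU_cherry .., rfl, rfl, hu, hv,
      (List.perm_append_cons_cons ..).symm.trans hY⟩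
  · rintro ⟨Wa, u, v, Wb, rfl, rfl, rfl, rfl, rfl, hperm⟩
    refine ⟨⟨List.perm_middle.trans (List.Perm.cons _ ?_),
      (List.perm_append_cons_cons ..).trans hperm⟩, ?_, bulletU_cherry ..⟩
    · rw [← List.map_append, ← List.map_append]
      exact ((hperm.map value).trans hY₀).cons_inv.cons_inv.map leaf
    · rw [foliageU_cherry_factor]
      simp [squashU]

lemma idxOf_cherry (l₁ : List ℕ) (l₂ : List UTree) :
    (l₁.map leaf ++ cherry a b :: l₂).idxOf (cherry a b) = l₁.length := by
  rw [List.idxOf_append_of_notMem (by simp [cherry]), List.idxOf_cons_self, List.length_map,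
    add_zero]

open Classical in
lemma card_cherryFactorizations (hY₀ : (Y₀.map value).Perm (a :: b :: ds)) (W : List UTree) :
    (cherryFactorizations a b ds Y₀ W).card = Multiset.countP (IsJoinIn a b ↑Y₀ ↑W) ↑W := by
  rw [Multiset.coe_countP, ← List.card_toFinset_findIdxs]
  refine Finset.card_nbij (fun p => p.1.idxOf (cherry a b)) ?_ ?_ ?_
  · rintro ⟨X, Y⟩ hp
    obtain ⟨Wa, u, v, Wb, rfl, rfl, -, hu, hv, hperm⟩ := (mem_cherryFactorizations_iff hY₀).1 hp
    simp only [Finset.mem_coe, List.mem_toFinset, idxOf_cherry, List.length_map,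
      List.mem_findIdxs_iff_exists_append, decide_eq_true_eq]
    exact ⟨Wa, node u v, Wb, rfl, rfl, isJoinIn_append_iff.2 ⟨u, v, rfl, hu, hv, hperm⟩⟩
  · rintro ⟨X, Y⟩ hp ⟨X', Y'⟩ hp' h
    obtain ⟨Wa, u, v, Wb, hW, rfl, rfl, -⟩ := (mem_cherryFactorizations_iff hY₀).1 hp
    obtain ⟨Wa', u', v', Wb', hW', rfl, rfl, -⟩ := (mem_cherryFactorizations_iff hY₀).1 hp'
    simp only [idxOf_cherry, List.length_map] at h
    obtain ⟨rfl, h'⟩ := List.append_inj (hW.symm.trans hW') h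
    simp only [List.cons.injEq, node.injEq] at h'
    obtain ⟨⟨rfl, rfl⟩, rfl⟩ := h'
    rfl
  · intro i hi
    simp only [Finset.mem_coe, List.mem_toFinset, List.mem_findIdxs_iff_exists_append,
      decide_eq_true_eq] at hi
    obtain ⟨Wa, t, Wb, rfl, rfl, hJ⟩ := hi
    obtain ⟨u, v, rfl, hu, hv, hperm⟩ := isJoinIn_append_iff.1 hJ
    refine ⟨(_, Wa ++ u :: v :: Wb),
      (mem_cherryFactorizations_iff hY₀).2 ⟨Wa, u, v, Wb, rfl, rfl, rfl, hu, hv, hperm⟩, ?_⟩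
    simp only [idxOf_cherry, List.length_map]

open Classical in
lemma mulM_polU_cherry_apply (k : Type) [CommSemiring k]
    (hY₀ : (Y₀.map value).Perm (a :: b :: ds)) (W : List UTree) :
    mulM k (polU k (cherry a b :: ds.map leaf)) (polU k Y₀) W
      = Multiset.countP (IsJoinIn a b ↑Y₀ ↑W) ↑W := by
  rw [← card_cherryFactorizations hY₀, cherryFactorizations, Finset.card_filter, Nat.cast_sum,
    mulM_eq_guardedMul]
  simp only [polU, map_sum, LinearMap.sum_apply, guardedMul_single_single, one_mul,
    Finset.sum_apply']
  rw [Finset.sum_product_right]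
  refine Finset.sum_congr rfl fun Y _ => Finset.sum_congr rfl fun X _ => ?_
  split_ifs <;> simp_all

end Counting

section Measure

def nodeSqSum (m : Multiset UTree) : ℕ := (m.map fun t => t.numNodes ^ 2).sum

lemma nodeSqSum_cons (t : UTree) (m : Multiset UTree) :
    nodeSqSum (t ::ₘ m) = t.numNodes ^ 2 + nodeSqSum m := by
  simp [nodeSqSum]

lemma numNodes_le_of_eq_or_numNodes_eq_zero {x A : UTree} (h : x = A ∨ x.numNodes = 0)
    (hv : x.value = A.value) : x.numNodes ≤ A.numNodes ∧ (x.numNodes = A.numNodes → x = A) := by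
  rcases h with rfl | h
  · exact ⟨le_rfl, fun _ => rfl⟩
  · refine ⟨h ▸ Nat.zero_le _, fun hA => ?_⟩
    rw [eq_leaf_of_numNodes_eq_zero h, eq_leaf_of_numNodes_eq_zero (hA.symm.trans h), hv]

variable {a b : ℕ} {Y W : Multiset UTree} {t : UTree}

lemma IsJoinIn.forall_mem (hJ : IsJoinIn a b Y W t) (ht : t ∈ W) {P : UTree → Prop}
    (hnode : ∀ u v, u.value = a → v.value = b → P u → P v → P (node u v))
    (hY : ∀ y ∈ Y, P y) : ∀ w ∈ W, P w := by
  obtain ⟨u, v, rfl, hu, hv, rfl⟩ := hJ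
  intro w hw
  rw [← Multiset.cons_erase ht, Multiset.mem_cons] at hw
  rcases hw with rfl | hw
  · exact hnode u v hu hv (hY u (by simp)) (hY v (by simp))
  · exact hY w (by simp [hw])

lemma IsJoinIn.cons_cons_map_value (hJ : IsJoinIn a b Y W t) (ht : t ∈ W) :
    a ::ₘ b ::ₘ W.map value = (a + b) ::ₘ Y.map value := by
  obtain ⟨u, v, rfl, rfl, rfl, rfl⟩ := hJ
  conv_lhs => rw [← Multiset.cons_erase ht]
  simp only [Multiset.map_cons, value, Multiset.cons_swap (u.value + v.value)]

/-- The parts `u, v` joined in `W` are `A, B` or leaves, so their node counts are at most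
those of `A, B`, and `(x + y + 1)² - x² - y²` is increasing in `x` and `y`. -/
lemma IsJoinIn.nodeSqSum_lt {A B : UTree} {R : Multiset UTree}
    (hJ : IsJoinIn a b (A ::ₘ B ::ₘ R) W t) (ht : t ∈ W) (ha : 0 < a) (hab : a < b)
    (hA : A.value = a) (hB : B.value = b) (hR : ∀ r ∈ R, r.value < a + b → r.numNodes = 0) :
    W = node A B ::ₘ R ∨ nodeSqSum W < nodeSqSum (node A B ::ₘ R) := by
  obtain ⟨u, v, rfl, hu, hv, h⟩ := hJ
  have hsmall : ∀ x ∈ A ::ₘ B ::ₘ R, x.value < a + b → x = A ∨ x = B ∨ x.numNodes = 0 := by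
    intro x hx hxv
    rcases Multiset.mem_cons.1 hx with rfl | hx
    · exact .inl rfl
    rcases Multiset.mem_cons.1 hx with rfl | hx
    · exact .inr (.inl rfl)
    · exact .inr (.inr (hR x hx hxv))
  have hu' : u = A ∨ u.numNodes = 0 := by
    rcases hsmall u (h ▸ by simp) (by omega) with hu' | rfl | hu'
    exacts [.inl hu', by omega, .inr hu']
  have hv' : v = B ∨ v.numNodes = 0 := by
    rcases hsmall v (h ▸ by simp) (by omega) with rfl | hv' | hv'
    exacts [by omega, .inl hv', .inr hv']
  obtain ⟨hu₁, hu₂⟩ := numNodes_le_of_eq_or_numNodes_eq_zero hu' (hu.trans hA.symm)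
  obtain ⟨hv₁, hv₂⟩ := numNodes_le_of_eq_or_numNodes_eq_zero hv' (hv.trans hB.symm)
  have hsq := congrArg nodeSqSum h
  simp only [nodeSqSum_cons] at hsq
  rw [← Multiset.cons_erase ht]
  by_cases heq : u.numNodes = A.numNodes ∧ v.numNodes = B.numNodes
  · rw [hu₂ heq.1, hv₂ heq.2] at h ⊢
    exact .inl (by rw [(Multiset.cons_inj_right _).1 ((Multiset.cons_inj_right _).1 h)])
  · have hlt : u.numNodes + v.numNodes < A.numNodes + B.numNodes := by omega
    have hmul := Nat.mul_le_mul hu₁ hv₁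
    refine .inr ?_
    simp only [nodeSqSum_cons, numNodes]
    nlinarith

end Measure

section Forests

variable {a b : ℕ} {Y W Z : List UTree} {t t' A B : UTree}

lemma isUForest_iff : IsUForest Z ↔ ∀ t ∈ Z, ∀ x ∈ t.foliage, 0 < x :=
  ⟨fun h t ht x hx => h x (List.mem_flatMap.2 ⟨t, ht, hx⟩),
    fun h x hx => let ⟨t, ht, hx⟩ := List.mem_flatMap.1 hx; h t ht x hx⟩

lemma IsUForest.squashU_pos (hZ : IsUForest Z) :
    ∀ x ∈ (↑(squashU Z) : Multiset ℕ), 0 < x := by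
  intro x hx
  obtain ⟨t, ht, rfl⟩ := List.mem_map.1 (Multiset.mem_coe.1 hx)
  exact value_pos (isUForest_iff.1 hZ t ht)

lemma IsJoinIn.isUForest (hJ : IsJoinIn a b ↑Y ↑W t) (ht : t ∈ W) (hY : IsUForest Y) :
    IsUForest W :=
  isUForest_iff.2 <| hJ.forall_mem (Multiset.mem_coe.2 ht)
    (P := fun t => ∀ x ∈ t.foliage, 0 < x)
    (fun _ _ _ _ hu hv x hx => (List.mem_append.1 hx).elim (hu x) (hv x))
    (isUForest_iff.1 hY)

lemma IsJoinIn.forestAlignedU (hJ : IsJoinIn a b ↑Y ↑W t) (ht : t ∈ W) (hab : a < b)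
    (hY : ForestAlignedU Y) : ForestAlignedU W :=
  hJ.forall_mem (Multiset.mem_coe.2 ht) (fun _ _ hu hv hu' hv' => ⟨hu ▸ hv ▸ hab, hu', hv'⟩) hY

lemma IsJoinIn.squashU_eq (hJ : IsJoinIn a b ↑Y ↑W t)
    (ht : t ∈ W) (hJ' : IsJoinIn a b ↑Y ↑Z t') (ht' : t' ∈ Z) :
    (↑(squashU W) : Multiset ℕ) = ↑(squashU Z) := by
  have h := (hJ.cons_cons_map_value (Multiset.mem_coe.2 ht)).trans
    (hJ'.cons_cons_map_value (Multiset.mem_coe.2 ht')).symm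
  simpa [squashU] using h

lemma IsUForest.split_node (hZ : IsUForest Z) (hABZ : node A B ∈ Z) :
    IsUForest (A :: B :: Z.erase (node A B)) := by
  have hAB := isUForest_iff.1 hZ _ hABZ
  simp only [isUForest_iff, List.forall_mem_cons]
  exact ⟨fun x hx => hAB x (by simp [foliage, hx]), fun x hx => hAB x (by simp [foliage, hx]),
    fun t ht => isUForest_iff.1 hZ t (List.mem_of_mem_erase ht)⟩

lemma ForestAlignedU.split_node (hZA : ForestAlignedU Z) (hABZ : node A B ∈ Z) :
    ForestAlignedU (A :: B :: Z.erase (node A B)) := by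
  obtain ⟨-, hA, hB⟩ := hZA _ hABZ
  simp only [ForestAlignedU, List.forall_mem_cons]
  exact ⟨hA, hB, fun t ht => hZA t (List.mem_of_mem_erase ht)⟩

lemma nodeSqSum_split_node_lt (hABZ : node A B ∈ Z) :
    nodeSqSum ↑(A :: B :: Z.erase (node A B)) < nodeSqSum ↑Z := by
  rw [Multiset.coe_eq_coe.2 (List.perm_cons_erase hABZ)]
  simp only [← Multiset.cons_coe, nodeSqSum_cons, numNodes]
  nlinarith [Nat.zero_le (A.numNodes * B.numNodes)]

lemma polU_mem_rangeEIota_of_forall_numNodes_eq_zero (k : Type) [CommSemiring k]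
    (hZ : IsUForest Z) (hleaf : ∀ t ∈ Z, t.numNodes = 0) :
    polU k Z ∈ rangeEIota k ↑(squashU Z) := by
  have hperm : ((↑(squashU Z) : Multiset ℕ).toList.map leaf).Perm Z := by
    conv_rhs => rw [← map_leaf_map_value hleaf]
    exact (Multiset.coe_eq_coe.1 (Multiset.coe_toList _)).map leaf
  rw [← polU_perm k hperm]
  exact polU_map_leaf_mem_rangeEIota k hZ.squashU_pos

end Forests

section Main

variable (k : Type) [Field k] [CharZero k]

lemma polU_mem_rangeEIota_of_minimal {Z : List UTree} (hZ : IsUForest Z)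
    (hZA : ForestAlignedU Z) {A B : UTree} (hABZ : node A B ∈ Z)
    (hmin : ∀ t ∈ Z, t.numNodes ≠ 0 → (node A B).value ≤ t.value)
    (ih : ∀ W : List UTree, nodeSqSum ↑W < nodeSqSum ↑Z → IsUForest W → ForestAlignedU W →
      polU k W ∈ rangeEIota k ↑(squashU W)) :
    polU k Z ∈ rangeEIota k ↑(squashU Z) := by
  classical
  set R := Z.erase (node A B)
  set Y₀ := A :: B :: R
  have hZR : (↑Z : Multiset UTree) = node A B ::ₘ ↑R :=
    Multiset.coe_eq_coe.2 (List.perm_cons_erase hABZ)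
  have hab : A.value < B.value := (hZA _ hABZ).1
  have ha : 0 < A.value :=
    value_pos fun x hx => isUForest_iff.1 hZ _ hABZ x (by simp [foliage, hx])
  have hY₀ : IsUForest Y₀ := hZ.split_node hABZ
  have hY₀A : ForestAlignedU Y₀ := hZA.split_node hABZ
  have hq : (↑(squashU Z) : Multiset ℕ) = (A.value + B.value) ::ₘ ↑(squashU R) := by
    rw [squashU, ← Multiset.map_coe, hZR]
    rfl
  have hf := mulM_cherry_mem_rangeEIota k ha hab hZ.squashU_pos (hq ▸ Multiset.mem_cons_self _ _)
    (y := polU k Y₀) (by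
      rw [applyStep, hq, Multiset.erase_cons_head]
      exact ih Y₀ (nodeSqSum_split_node_lt hABZ) hY₀ hY₀A)
  have hds : ((↑(squashU Z) : Multiset ℕ).erase (A.value + B.value)).toList.Perm (squashU R) := by
    rw [hq, Multiset.erase_cons_head, ← Multiset.coe_eq_coe, Multiset.coe_toList]
  rw [polU_perm k ((hds.map leaf).cons _)] at hf
  have hcoeff := mulM_polU_cherry_apply k (ds := squashU R) (Y₀ := Y₀) (List.Perm.refl _)
  have hJZ : IsJoinIn A.value B.value ↑Y₀ ↑Z (node A B) :=
    ⟨A, B, rfl, rfl, rfl, by rw [hZR, Multiset.erase_cons_head]; rfl⟩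
  refine polU_mem_of_perm_invariant hf
    (fun W W' h => by rw [hcoeff, hcoeff, Multiset.coe_eq_coe.2 h]) ?_ fun W hW hWZ => ?_
  · rw [hcoeff, Nat.cast_ne_zero, ← pos_iff_ne_zero, Multiset.countP_pos]
    exact ⟨node A B, hABZ, hJZ⟩
  · rw [hcoeff, Nat.cast_ne_zero, ← pos_iff_ne_zero, Multiset.countP_pos] at hW
    obtain ⟨t, ht, hJ⟩ := hW
    have hR : ∀ r ∈ (↑R : Multiset UTree), r.value < A.value + B.value → r.numNodes = 0 :=
      fun r hr hrv => by_contra fun h => (hmin r (List.mem_of_mem_erase hr) h).not_gt hrv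
    have hlt := (hJ.nodeSqSum_lt ht ha hab rfl rfl hR).resolve_left
      fun h => hWZ (Multiset.coe_eq_coe.1 (h.trans hZR.symm))
    rw [← hZR] at hlt
    rw [← hJ.squashU_eq ht hJZ hABZ]
    exact ih W hlt (hJ.isUForest ht hY₀) (hJ.forestAlignedU ht hab hY₀A)

theorem polU_mem_rangeEIota {Z : List UTree} (hZ : IsUForest Z) (hZA : ForestAlignedU Z) :
    polU k Z ∈ rangeEIota k ↑(squashU Z) := by
  induction hn : nodeSqSum ↑Z using Nat.strong_induction_on generalizing Z with
  | _ n ih =>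
  by_cases hleaf : ∀ t ∈ Z, t.numNodes = 0
  · exact polU_mem_rangeEIota_of_forall_numNodes_eq_zero k hZ hleaf
  obtain ⟨T, hT, hTmin⟩ := (Z.filter (·.numNodes ≠ 0)).toFinset.exists_min_image value <| by
    obtain ⟨t, ht, h⟩ := not_forall₂.1 hleaf
    exact ⟨t, by simp [ht, h]⟩
  simp only [List.mem_toFinset, List.mem_filter, decide_eq_true_eq] at hT hTmin
  obtain ⟨A, B, rfl⟩ : ∃ A B, T = node A B := by
    cases T with
    | leaf x => exact absurd rfl hT.2
    | node A B => exact ⟨A, B, rfl⟩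
  exact polU_mem_rangeEIota_of_minimal k hZ hZA hT.1 (fun t ht h => hTmin t ⟨ht, h⟩)
    fun W hW hW₁ hW₂ => ih _ (hn ▸ hW) hW₁ hW₂ rfl

end Main

/-- **Proposition `MainFactorization`.** The composite `E ∘ ι : kQ → kℳ⁺` is
surjective: every Pólya orbit sum of an aligned unlabeled forest lies in
`E(ι(kQ))`. -/
theorem E_iota_surjective (k : Type) [Field k] [CharZero k]
    (X : List UTree) (hX : IsUForest X) (hA : ForestAlignedU X) :
    ∃ x : QPath →₀ k, (∀ P ∈ x.support, P.Valid) ∧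
      EL k (iotaLinM k x) = polU k X := by
  obtain ⟨x, hx, hEL⟩ := polU_mem_rangeEIota k hX hA
  exact ⟨x, fun P hP => ((mem_supported k x).1 hx hP).1, hEL⟩
end
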